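/- arXiv:1903.07325 — 6 statements merged into one kernel-verified Lean document; each statement's English description precedes it below -/
import Mathlib

section
/- For every n ≥ 5 the completely positive cone CPPⁿ is a proper subset of the doubly nonnegative cone DNNⁿ; i.e., there exists an n×n symmetric matrix that is positive semidefinite and entrywise nonnegative but not completely positive. -/
/-!
The Horn matrix `H` (entries `1` on the diagonal and between non-neighbours of the
5-cycle, `-1` between neighbours) is copositive, so `tr (H X) = ∑ₖ yₖᵀ H yₖ ≥ 0` for every
completely positive `X = ∑ₖ yₖ yₖᵀ`. The Gram matrix `X₀ = F Fᵀ` of five suitable rows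
`F i ∈ ℝ³` is doubly nonnegative with `tr (H X₀) = -2`, hence not completely positive.
For `n ≥ 5`, padding `F` with zero rows gives an `n × n` doubly nonnegative matrix whose
leading `5 × 5` principal submatrix is `X₀`, and complete positivity passes to principal
submatrices.
-/

open Matrix

/-- X is completely positive: a finite sum of outer products of nonnegative vectors. -/
def IsCompletelyPositive {n : ℕ} (X : Matrix (Fin n) (Fin n) ℝ) : Prop :=
  ∃ (m : ℕ) (y : Fin m → Fin n → ℝ), (∀ k i, 0 ≤ y k i) ∧
    X = ∑ k, vecMulVec (y k) (y k)

namespace Matrix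

variable {ι κ α R : Type*} {e : ι → κ}

noncomputable def extendRows [Zero R] (e : ι → κ) (M : Matrix ι α R) : Matrix κ α R :=
  Function.extend e M 0

theorem extendRows_apply_self [Zero R] (he : e.Injective) (M : Matrix ι α R) (i : ι) :
    extendRows e M (e i) = M i :=
  he.extend_apply M 0 i

theorem extendRows_apply_of_notMem_range [Zero R] (M : Matrix ι α R) {k : κ}
    (hk : k ∉ Set.range e) : extendRows e M k = 0 :=
  Function.extend_apply' _ _ _ hk

variable [Fintype α] [NonUnitalNonAssocSemiring R]

theorem submatrix_extendRows_mul_transpose (he : e.Injective) (M : Matrix ι α R) :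
    (extendRows e M * (extendRows e M)ᵀ).submatrix e e = M * Mᵀ := by
  ext i j
  simp [mul_apply, extendRows_apply_self he]

theorem extendRows_mul_transpose_nonneg [PartialOrder R] (he : e.Injective)
    {M : Matrix ι α R} (hM : ∀ i j, 0 ≤ (M * Mᵀ) i j) (k l : κ) :
    0 ≤ (extendRows e M * (extendRows e M)ᵀ) k l := by
  by_cases hk : k ∈ Set.range e
  · by_cases hl : l ∈ Set.range e
    · obtain ⟨⟨i, rfl⟩, ⟨j, rfl⟩⟩ := And.intro hk hl
      simpa [← submatrix_extendRows_mul_transpose he M] using hM i j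
    · simp [mul_apply, extendRows_apply_of_notMem_range M hl]
  · simp [mul_apply, extendRows_apply_of_notMem_range M hk]

def IsCopositive {ι : Type*} [Fintype ι] (C : Matrix ι ι ℝ) : Prop :=
  ∀ x : ι → ℝ, 0 ≤ x → 0 ≤ x ⬝ᵥ C *ᵥ x

end Matrix

namespace IsCompletelyPositive

variable {m n : ℕ} {X : Matrix (Fin n) (Fin n) ℝ}

theorem submatrix (hX : IsCompletelyPositive X) (f : Fin m → Fin n) :
    IsCompletelyPositive (X.submatrix f f) := by
  obtain ⟨r, y, hy, rfl⟩ := hX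
  refine ⟨r, fun k => y k ∘ f, fun k i => hy k (f i), ?_⟩
  ext i j
  simp [Matrix.sum_apply, vecMulVec_apply]

theorem trace_mul_nonneg {C : Matrix (Fin n) (Fin n) ℝ} (hC : C.IsCopositive)
    (hX : IsCompletelyPositive X) : 0 ≤ (C * X).trace := by
  obtain ⟨m, y, hy, rfl⟩ := hX
  rw [Matrix.mul_sum, trace_sum]
  refine Finset.sum_nonneg fun k _ => ?_
  rw [mul_vecMulVec, trace_vecMulVec, dotProduct_comm]
  exact hC _ (hy k)

end IsCompletelyPositive

def hornMatrix : Matrix (Fin 5) (Fin 5) ℝ :=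
  !![1, -1, 1, 1, -1; -1, 1, -1, 1, 1; 1, -1, 1, -1, 1; 1, 1, -1, 1, -1; -1, 1, 1, -1, 1]

theorem isCopositive_hornMatrix : hornMatrix.IsCopositive := by
  intro x hx
  have h : ∀ i, 0 ≤ x i := hx
  simp only [dotProduct, mulVec, hornMatrix, of_apply, cons_val', cons_val_fin_one,
    Fin.sum_univ_five, cons_val_zero, cons_val_one, cons_val, one_mul, neg_mul]
  -- `xᵀHx = (x₀ - x₁ + x₂ + x₃ - x₄)² + 4x₁x₃ + 4x₂(x₄ - x₃)`
  --      `= (x₀ - x₁ + x₂ - x₃ + x₄)² + 4x₁x₄ + 4x₀(x₃ - x₄)`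
  rcases le_total (x 3) (x 4) with h34 | h43
  · nlinarith [sq_nonneg (x 0 - x 1 + x 2 + x 3 - x 4), mul_nonneg (h 1) (h 3),
      mul_nonneg (h 2) (sub_nonneg.2 h34)]
  · nlinarith [sq_nonneg (x 0 - x 1 + x 2 - x 3 + x 4), mul_nonneg (h 1) (h 4),
      mul_nonneg (h 0) (sub_nonneg.2 h43)]

-- Rows `(1, cos (2πi/5), sin (2πi/5))` rounded to integers: the last two columns lie near
-- the negative eigenspace of `hornMatrix`.
def hornWitnessFactor : Matrix (Fin 5) (Fin 3) ℝ :=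
  !![1, 1, 0; 1, 0, 1; 1, -1, 1; 1, -1, -1; 1, 0, -1]

def hornWitness : Matrix (Fin 5) (Fin 5) ℝ :=
  !![2, 1, 0, 0, 1; 1, 2, 2, 0, 0; 0, 2, 3, 1, 0; 0, 0, 1, 3, 2; 1, 0, 0, 2, 2]

theorem hornWitnessFactor_mul_transpose :
    hornWitnessFactor * hornWitnessFactorᵀ = hornWitness := by
  ext i j
  fin_cases i <;> fin_cases j <;>
    norm_num [hornWitnessFactor, hornWitness, mul_apply, Fin.sum_univ_three, cons_val_two]

theorem hornWitness_nonneg (i j : Fin 5) : 0 ≤ hornWitness i j := by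
  fin_cases i <;> fin_cases j <;> norm_num [hornWitness]

theorem trace_hornMatrix_mul_hornWitness : (hornMatrix * hornWitness).trace = -2 := by
  norm_num [hornMatrix, hornWitness, trace, mul_apply, Fin.sum_univ_five, cons_val_two,
    cons_val_three, cons_val_four]

theorem not_isCompletelyPositive_hornWitness : ¬ IsCompletelyPositive hornWitness := fun h => by
  linarith [h.trace_mul_nonneg isCopositive_hornMatrix, trace_hornMatrix_mul_hornWitness]

theorem stmt_3 {n : ℕ} (hn : 5 ≤ n) :
    ∃ X : Matrix (Fin n) (Fin n) ℝ, X.IsSymm ∧ X.PosSemidef ∧ (∀ i j, 0 ≤ X i j) ∧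
      ¬ IsCompletelyPositive X := by
  have he : (Fin.castLE hn).Injective := Fin.castLE_injective hn
  set B := extendRows (Fin.castLE hn) hornWitnessFactor
  have hB : (B * Bᵀ).submatrix (Fin.castLE hn) (Fin.castLE hn) = hornWitness := by
    rw [submatrix_extendRows_mul_transpose he, hornWitnessFactor_mul_transpose]
  refine ⟨B * Bᵀ, by rw [IsSymm, transpose_mul, transpose_transpose], ?_, ?_, fun h => ?_⟩
  · simpa using posSemidef_self_mul_conjTranspose B
  · exact extendRows_mul_transpose_nonneg he
      (hornWitnessFactor_mul_transpose ▸ hornWitness_nonneg)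
  · exact not_isCompletelyPositive_hornWitness (hB ▸ h.submatrix (Fin.castLE hn))
end

section
/- In a connected block-clique graph, a vertex is a cut vertex if and only if it is contained in at least two distinct maximal cliques of the graph. -/
open SimpleGraph

/-- A cycle has a chord: two of its vertices are adjacent in `G` via an edge not on the cycle. -/
def HasChord {V : Type} (G : SimpleGraph V) {v : V} (c : G.Walk v v) : Prop :=
  ∃ x y, x ∈ c.support ∧ y ∈ c.support ∧ G.Adj x y ∧ s(x, y) ∉ c.edges

/-- G is chordal: every cycle of length at least 4 has a chord. -/
def IsChordal {V : Type} (G : SimpleGraph V) : Prop :=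
  ∀ (v : V) (c : G.Walk v v), c.IsCycle → 4 ≤ c.length → HasChord G c

/-- s is a maximal clique of G. -/
def IsMaxClique {V : Type} (G : SimpleGraph V) (s : Set V) : Prop :=
  G.IsClique s ∧ ∀ t : Set V, G.IsClique t → s ⊆ t → t = s

/-- v is a cut vertex of G: removing v disconnects G. -/
def IsCutVertex {V : Type} (G : SimpleGraph V) (v : V) : Prop :=
  ¬ (SimpleGraph.induce {u | u ≠ v} G).Preconnected

/-!
If `v` is a cut vertex, follow walks from two vertices in different components of `G - v` up to
`v`: the last vertices `u₁`, `u₂` before `v` are neighbours of `v` in different components, so no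
clique contains both, and maximal cliques containing `{v, u₁}` and `{v, u₂}` differ.

Conversely, let `a ∈ s \ t` and `b ∈ t \ s` for maximal cliques `s ≠ t` through `v`. The crux is
that in a block-clique graph two neighbours of `v` joined by a walk avoiding `v` are adjacent:
a shortest such path closes up through `v` to a cycle, whose chord must run from `v` to an inner
vertex `w` of the path (a chord inside the path would shorten it); by induction `a` and `b` are
both adjacent to `w`, and the two triangles `vwa`, `vwb` lie in a common maximal clique since
they share the edge `vw`. Then `{v, a, b}` is a clique, whose maximal extension meets both `s`
and `t` in two vertices, forcing `s = t`.
-/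

namespace SimpleGraph

variable {V : Type} {G : SimpleGraph V}

lemma exists_isMaxClique_superset {s : Set V} (hs : G.IsClique s) :
    ∃ t, IsMaxClique G t ∧ s ⊆ t := by
  obtain ⟨m, hsm, hm⟩ := zorn_subset_nonempty {t : Set V | G.IsClique t}
    (fun c hc hchain _ =>
      ⟨⋃₀ c, (isClique_sUnion hchain.directedOn).2 hc, fun _ => Set.subset_sUnion_of_mem⟩)
    s hs
  exact ⟨m, ⟨hm.prop, fun t ht hmt => (hm.2 ht hmt).antisymm hmt⟩, hsm⟩

lemma isClique_triple {a b c : V} (hab : G.Adj a b) (hac : G.Adj a c) (hbc : G.Adj b c) :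
    G.IsClique {a, b, c} := by
  simp [isClique_insert, hab, hac, hbc]

lemma exists_adj_reachable_induce_ne {v x : V} (hx : x ≠ v) (p : G.Walk x v) :
    ∃ (u : V) (hu : u ≠ v), G.Adj u v ∧ (G.induce {u | u ≠ v}).Reachable ⟨x, hx⟩ ⟨u, hu⟩ := by
  induction p with
  | nil => exact absurd rfl hx
  | @cons x c v hxc p ih =>
    by_cases hc : c = v
    · subst hc
      exact ⟨x, hx, hxc, .rfl⟩
    obtain ⟨u, hu, huv, hcu⟩ := ih hc
    exact ⟨u, hu, huv, (induce_adj.2 hxc).reachable.trans hcu⟩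

lemma Reachable.exists_walk_of_induce {s : Set V} {x y : s} (h : (G.induce s).Reachable x y) :
    ∃ p : G.Walk x y, ∀ z ∈ p.support, z ∈ s := by
  obtain ⟨p⟩ := h
  have hp : ∀ z ∈ (p.map (Embedding.induce s).toHom).support, z ∈ s := by
    simp only [Walk.support_map, List.mem_map]
    rintro _ ⟨z, -, rfl⟩
    exact z.2
  exact ⟨_, hp⟩

lemma exists_isMaxClique_ne_of_isCutVertex (hconn : G.Connected) {v : V}
    (hv : IsCutVertex G v) :
    ∃ s t : Set V, IsMaxClique G s ∧ IsMaxClique G t ∧ s ≠ t ∧ v ∈ s ∧ v ∈ t := by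
  obtain ⟨x, y, hxy⟩ : ∃ x y, ¬ (G.induce {u | u ≠ v}).Reachable x y := by
    simpa [IsCutVertex, Preconnected] using hv
  obtain ⟨px⟩ := hconn.preconnected x.1 v
  obtain ⟨py⟩ := hconn.preconnected y.1 v
  obtain ⟨u₁, hu₁, hu₁v, hxu₁⟩ := exists_adj_reachable_induce_ne x.2 px
  obtain ⟨u₂, hu₂, hu₂v, hyu₂⟩ := exists_adj_reachable_induce_ne y.2 py
  obtain ⟨s, hs, hvu₁⟩ := exists_isMaxClique_superset (isClique_pair.2 fun _ => hu₁v.symm)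
  obtain ⟨t, ht, hvu₂⟩ := exists_isMaxClique_superset (isClique_pair.2 fun _ => hu₂v.symm)
  refine ⟨s, t, hs, ht, ?_, hvu₁ (by simp), hvu₂ (by simp)⟩
  rintro rfl
  have hu₁u₂ : (G.induce {u | u ≠ v}).Reachable ⟨u₁, hu₁⟩ ⟨u₂, hu₂⟩ := by
    by_cases h : u₁ = u₂
    · subst h
      rfl
    · exact (induce_adj.2 (hs.1 (hvu₁ (by simp)) (hvu₂ (by simp)) h)).reachable
  exact hxy (hxu₁.trans (hu₁u₂.trans hyu₂.symm))

namespace Walk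

lemma exists_length_lt_of_adj_of_notMem_edges {a b : V} (q : G.Walk a b) {x y : V}
    (hx : x ∈ q.support) (hy : y ∈ q.support) (hxy : G.Adj x y) (he : s(x, y) ∉ q.edges) :
    ∃ r : G.Walk a b, r.length < q.length ∧ r.support ⊆ q.support := by
  classical
  induction q with
  | nil => simp_all
  | @cons a c b hac q ih =>
    have shortcut : ∀ z ∈ (cons hac q).support, G.Adj a z → s(a, z) ∉ (cons hac q).edges →
        ∃ r : G.Walk a b, r.length < (cons hac q).length ∧ r.support ⊆ (cons hac q).support := by
      intro z hz haz hez
      have hzq : z ∈ q.support := by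
        simpa [support_cons, haz.ne.symm] using hz
      have hzc : z ≠ c := by rintro rfl; simp at hez
      refine ⟨cons haz (q.dropUntil z hzq), ?_, ?_⟩
      · simpa using length_dropUntil_lt_length hzq hzc
      · exact List.cons_subset_cons _ (q.support_dropUntil_subset_support hzq)
    by_cases hxa : x = a
    · subst hxa
      exact shortcut y hy hxy he
    by_cases hya : y = a
    · subst hya
      exact shortcut x hx hxy.symm (by rwa [Sym2.eq_swap])
    obtain ⟨r, hr, hrq⟩ := ih (by simpa [hxa] using hx) (by simpa [hya] using hy)
      (fun h => he (by simp [h]))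
    exact ⟨cons hac r, by simpa using hr, List.cons_subset_cons _ hrq⟩

end Walk

section BlockClique

variable (hbc : ∀ s t : Set V, IsMaxClique G s → IsMaxClique G t → s ≠ t →
  (s ∩ t).Subsingleton)
include hbc

lemma IsMaxClique.eq_of_mem_of_mem {s t : Set V} (hs : IsMaxClique G s) (ht : IsMaxClique G t)
    {x y : V} (hxy : x ≠ y) (hxs : x ∈ s) (hxt : x ∈ t) (hys : y ∈ s) (hyt : y ∈ t) : s = t := by
  by_contra hst
  exact hxy (hbc s t hs ht hst ⟨hxs, hxt⟩ ⟨hys, hyt⟩)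

/-- Block-clique graphs are diamond-free: two triangles on a common edge span a clique. -/
lemma adj_of_adj_of_adj {v w a b : V} (hvw : G.Adj v w) (hva : G.Adj v a) (hwa : G.Adj w a)
    (hvb : G.Adj v b) (hwb : G.Adj w b) (hab : a ≠ b) : G.Adj a b := by
  obtain ⟨S, hS, hvwa⟩ := exists_isMaxClique_superset (isClique_triple hvw hva hwa)
  obtain ⟨T, hT, hvwb⟩ := exists_isMaxClique_superset (isClique_triple hvw hvb hwb)
  have hST : S = T := hS.eq_of_mem_of_mem hbc hT hvw.ne
    (hvwa (by simp)) (hvwb (by simp)) (hvwa (by simp)) (hvwb (by simp))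
  exact hS.1 (hvwa (by simp)) (hST ▸ hvwb (by simp)) hab

lemma adj_of_walk_notMem_support (hchordal : IsChordal G) {v a b : V} (p : G.Walk a b)
    (hp : v ∉ p.support) (hva : G.Adj v a) (hvb : G.Adj v b) (hab : a ≠ b) : G.Adj a b := by
  induction hn : p.length using Nat.strong_induction_on generalizing a b with
  | _ n ih =>
  classical
  obtain ⟨q, hq, hqn, hqv⟩ : ∃ q : G.Walk a b, q.IsPath ∧ q.length ≤ n ∧ v ∉ q.support :=
    ⟨p.bypass, p.bypass_isPath, hn ▸ p.length_bypass_le_length,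
      fun h => hp (p.support_bypass_subset_support h)⟩
  have ih' : ∀ {a' b' : V} (r : G.Walk a' b'), r.length < q.length → v ∉ r.support →
      G.Adj v a' → G.Adj v b' → a' ≠ b' → G.Adj a' b' :=
    fun r hr hrv ha hb hab => ih _ (by omega) r hrv ha hb hab rfl
  have hq0 : q.length ≠ 0 := fun h => hab (Walk.eq_of_length_eq_zero h)
  rcases lt_or_ge q.length 2 with hq1 | hq2
  · exact q.adj_of_length_eq_one (by omega)
  let c := Walk.cons hva (q.concat hvb.symm)
  have hc : c.IsCycle := by
    refine (Walk.cons_isCycle_iff _ _).2 ⟨hq.concat hqv _, fun h => ?_⟩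
    rw [Walk.edges_concat, List.concat_eq_append, List.mem_append] at h
    rcases h with h | h
    · exact hqv (q.fst_mem_support_of_mem_edges h)
    · simp [hab, hva.ne'] at h
  have hc_supp : ∀ z ∈ c.support, z = v ∨ z ∈ q.support := by
    simp [c, Walk.support_concat, or_comm]
  have hq_edges : q.edges ⊆ c.edges := fun e he => by simp [c, Walk.edges_concat, he]
  have chord_at_v : ∀ w ∈ q.support, G.Adj v w → s(v, w) ∉ c.edges → G.Adj a b := by
    intro w hw hvw hvw_c
    have hwa : w ≠ a := by rintro rfl; simp [c] at hvw_c
    have hwb : w ≠ b := by rintro rfl; simp [c, Walk.edges_concat, Sym2.eq_swap] at hvw_c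
    have haw : G.Adj a w := ih' (q.takeUntil w hw) (q.length_takeUntil_lt_length hw hwb)
      (fun h => hqv (q.support_takeUntil_subset_support hw h)) hva hvw hwa.symm
    have hwb' : G.Adj w b := ih' (q.dropUntil w hw) (q.length_dropUntil_lt_length hw hwa)
      (fun h => hqv (q.support_dropUntil_subset_support hw h)) hvw hvb hwb
    exact adj_of_adj_of_adj hbc hvw hva haw.symm hvb hwb' hab
  obtain ⟨x, y, hx, hy, hxy, hxy_c⟩ := hchordal v c hc (by simp [c]; omega)
  rcases hc_supp x hx with rfl | hxq <;> rcases hc_supp y hy with rfl | hyq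
  · exact absurd hxy (G.irrefl)
  · exact chord_at_v y hyq hxy hxy_c
  · exact chord_at_v x hxq hxy.symm (by rwa [Sym2.eq_swap])
  · obtain ⟨r, hr, hrq⟩ :=
      q.exists_length_lt_of_adj_of_notMem_edges hxq hyq hxy (fun h => hxy_c (hq_edges h))
    exact ih' r hr (fun h => hqv (hrq h)) hva hvb hab

lemma isCutVertex_of_isMaxClique_ne (hchordal : IsChordal G) {v : V} {s t : Set V}
    (hs : IsMaxClique G s) (ht : IsMaxClique G t) (hst : s ≠ t) (hvs : v ∈ s) (hvt : v ∈ t) :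
    IsCutVertex G v := by
  obtain ⟨a, has, hat⟩ := Set.not_subset.1 fun h => hst (hs.2 t ht.1 h).symm
  obtain ⟨b, hbt, hbs⟩ := Set.not_subset.1 fun h => hst (ht.2 s hs.1 h)
  have hav : a ≠ v := fun h => hat (h ▸ hvt)
  have hbv : b ≠ v := fun h => hbs (h ▸ hvs)
  have hva : G.Adj v a := hs.1 hvs has hav.symm
  have hvb : G.Adj v b := ht.1 hvt hbt hbv.symm
  intro hpre
  obtain ⟨p, hp⟩ := (hpre ⟨a, hav⟩ ⟨b, hbv⟩).exists_walk_of_induce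
  have hab : G.Adj a b := adj_of_walk_notMem_support hbc hchordal p (fun h => hp v h rfl) hva hvb
    fun h => hbs (h ▸ has)
  obtain ⟨u, hu, hvab⟩ := exists_isMaxClique_superset (isClique_triple hva hvb hab)
  have hus : u = s :=
    hu.eq_of_mem_of_mem hbc hs hav.symm (hvab (by simp)) hvs (hvab (by simp)) has
  have hut : u = t :=
    hu.eq_of_mem_of_mem hbc ht hbv.symm (hvab (by simp)) hvt (hvab (by simp)) hbt
  exact hst (hus.symm.trans hut)

end BlockClique

end SimpleGraph

theorem stmt_5 {V : Type} (G : SimpleGraph V) (hconn : G.Connected)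
    (hchordal : IsChordal G)
    (hbc : ∀ s t : Set V, IsMaxClique G s → IsMaxClique G t → s ≠ t →
      (s ∩ t).Subsingleton)
    (v : V) :
    IsCutVertex G v ↔
      ∃ s t : Set V, IsMaxClique G s ∧ IsMaxClique G t ∧ s ≠ t ∧ v ∈ s ∧ v ∈ t :=
  ⟨exists_isMaxClique_ne_of_isCutVertex hconn, fun ⟨_, _, hs, ht, hst, hvs, hvt⟩ =>
    isCutVertex_of_isMaxClique_ne hbc hchordal hs ht hst hvs hvt⟩
end

section
/- Let Ñ = {2,…,n} and assume Q⁰_Ñ ∈ S^{n−1}₊, Qᵖ ∈ Sⁿ₊ for p ∈ I_eq, and Qᵖ_Ñ ∈ S^{n−1}₊ for p ∈ I_ineq. Then the optimal values of COP(Γⁿ), COP(CPPⁿ), and COP(DNNⁿ) coincide: ζ(DNNⁿ) = ζ(CPPⁿ) = ζ(Γⁿ). -/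
open Matrix

def Gamma (n : ℕ) : Set (Matrix (Fin n) (Fin n) ℝ) :=
  {X | ∃ x : Fin n → ℝ, (∀ i, 0 ≤ x i) ∧ X = vecMulVec x x}

def CPP (n : ℕ) : Set (Matrix (Fin n) (Fin n) ℝ) := convexHull ℝ (Gamma n)

def DNN (n : ℕ) : Set (Matrix (Fin n) (Fin n) ℝ) :=
  {X | X.PosSemidef ∧ ∀ i j, 0 ≤ X i j}

/-- The feasible region of COP(K). -/
def copFeas {n : ℕ} {ι : Type} (Ieq Iineq : Finset ι)
    (Q : ι → Matrix (Fin (n + 1)) (Fin (n + 1)) ℝ)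
    (K : Set (Matrix (Fin (n + 1)) (Fin (n + 1)) ℝ)) :
    Set (Matrix (Fin (n + 1)) (Fin (n + 1)) ℝ) :=
  {X | X ∈ K ∧ X 0 0 = 1 ∧ (∀ p ∈ Ieq, trace (Q p * X) = 0) ∧
    ∀ p ∈ Iineq, trace (Q p * X) ≤ 0}

/-- The optimal value ζ(K) of COP(K). -/
noncomputable def copVal {n : ℕ} {ι : Type} (Ieq Iineq : Finset ι)
    (Q0 : Matrix (Fin (n + 1)) (Fin (n + 1)) ℝ)
    (Q : ι → Matrix (Fin (n + 1)) (Fin (n + 1)) ℝ)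
    (K : Set (Matrix (Fin (n + 1)) (Fin (n + 1)) ℝ)) : ℝ :=
  sInf ((fun X => trace (Q0 * X)) '' copFeas Ieq Iineq Q K)

/-! For `X` feasible in `COP(DNNⁿ)` with first column `x`, the Schur complement `Y = X - x xᵀ`
of the entry `X₁₁ = 1` (index `0` here) is positive semidefinite with `Y₁₁ = 0`, so each
hypothesis on `Qᵖ` makes `⟨Qᵖ, Y⟩ ≥ 0`. Hence `x xᵀ ∈ Γⁿ` (`x ≥ 0` since `X ≥ 0`) is feasible
with no larger objective; for `p ∈ I_eq` the two nonnegative terms `⟨Qᵖ, x xᵀ⟩` and `⟨Qᵖ, Y⟩`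
sum to `0`. As `Γⁿ ⊆ CPPⁿ ⊆ DNNⁿ`, the three infima coincide. -/

namespace Matrix

variable {m : Type*} [Fintype m]

lemma trace_mul_vecMulVec_self (Q : Matrix m m ℝ) (x : m → ℝ) :
    trace (Q * vecMulVec x x) = x ⬝ᵥ Q *ᵥ x := by
  rw [mul_vecMulVec, trace_vecMulVec, dotProduct_comm]

lemma dotProduct_vecMulVec_self_mulVec (x v : m → ℝ) :
    v ⬝ᵥ vecMulVec x x *ᵥ v = (v ⬝ᵥ x) ^ 2 := by
  simp [vecMulVec_mulVec, dotProduct_comm x, sq]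

lemma PosSemidef.dotProduct_mulVec_sq_le {X : Matrix m m ℝ} (hX : X.PosSemidef) (v w : m → ℝ) :
    (v ⬝ᵥ X *ᵥ w) ^ 2 ≤ (v ⬝ᵥ X *ᵥ v) * (w ⬝ᵥ X *ᵥ w) := by
  let := X.toSeminormedAddCommGroup hX
  let := X.toInnerProductSpace hX
  have hinner : ∀ a b : m → ℝ, inner ℝ a b = a ⬝ᵥ X *ᵥ b := fun a b => by
    change (X *ᵥ b) ⬝ᵥ star a = _
    rw [star_trivial, dotProduct_comm]
  simpa only [hinner, sq] using real_inner_mul_inner_self_le v w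

/-- The Schur complement of an entry `X i i = 1` is the case `u = Pi.single i 1`. -/
lemma PosSemidef.sub_vecMulVec_mulVec {X : Matrix m m ℝ} (hX : X.PosSemidef) {u : m → ℝ}
    (hu : u ⬝ᵥ X *ᵥ u = 1) : (X - vecMulVec (X *ᵥ u) (X *ᵥ u)).PosSemidef := by
  refine .of_dotProduct_mulVec_nonneg (hX.1.sub ?_) fun v => ?_
  · simpa using (posSemidef_vecMulVec_self_star (X *ᵥ u)).isHermitian
  · have hcs := hX.dotProduct_mulVec_sq_le v u
    rw [hu, mul_one] at hcs
    rwa [star_trivial, sub_mulVec, dotProduct_sub, dotProduct_vecMulVec_self_mulVec, sub_nonneg]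

/-- Writing `Y = Bᵀ B`, the `i`-th coordinate of every row of `B` vanishes, and
`trace (Q * Y)` is the sum of the values of the quadratic form of `Q` at these rows. -/
lemma PosSemidef.trace_mul_nonneg_of_apply_self_eq_zero {Q Y : Matrix m m ℝ} {i : m}
    (hY : Y.PosSemidef) (hYi : Y i i = 0) (hQ : ∀ v : m → ℝ, v i = 0 → 0 ≤ v ⬝ᵥ Q *ᵥ v) :
    0 ≤ trace (Q * Y) := by
  classical
  open scoped MatrixOrder in
  obtain ⟨B, rfl⟩ := CStarAlgebra.nonneg_iff_eq_star_mul_self.mp hY.nonneg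
  have hBi : ∀ k, B k i = 0 := by
    rw [mul_apply'] at hYi
    exact fun k => congrFun (dotProduct_self_eq_zero.mp hYi) k
  rw [← Matrix.mul_assoc, trace_mul_comm, ← Matrix.mul_assoc]
  refine Finset.sum_nonneg fun k _ => ?_
  have hcol : (fun j => (Q * star B) j k) = Q *ᵥ B k := by
    ext j
    simp [mul_apply, mulVec, dotProduct, star_eq_conjTranspose]
  rw [diag_apply, Matrix.mul_assoc, mul_apply', hcol]
  exact hQ (B k) (hBi k)

end Matrix

lemma Gamma_subset_CPP (n : ℕ) : Gamma n ⊆ CPP n := subset_convexHull ℝ _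

lemma Gamma_subset_DNN (n : ℕ) : Gamma n ⊆ DNN n := by
  rintro X ⟨x, hx, rfl⟩
  refine ⟨by simpa using posSemidef_vecMulVec_self_star x, fun i j => ?_⟩
  exact mul_nonneg (hx i) (hx j)

lemma convex_DNN (n : ℕ) : Convex ℝ (DNN n) := by
  rintro X ⟨hX, hXnn⟩ Y ⟨hY, hYnn⟩ a b ha hb -
  refine ⟨(hX.smul ha).add (hY.smul hb), fun i j => ?_⟩
  simp only [Matrix.add_apply, Matrix.smul_apply, smul_eq_mul]
  exact add_nonneg (mul_nonneg ha (hXnn i j)) (mul_nonneg hb (hYnn i j))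

lemma CPP_subset_DNN (n : ℕ) : CPP n ⊆ DNN n :=
  convexHull_min (Gamma_subset_DNN n) (convex_DNN n)

section COP

variable {n : ℕ} {ι : Type} (Ieq Iineq : Finset ι) (Q0 : Matrix (Fin (n + 1)) (Fin (n + 1)) ℝ)
  (Q : ι → Matrix (Fin (n + 1)) (Fin (n + 1)) ℝ)

lemma copFeas_mono {K L : Set (Matrix (Fin (n + 1)) (Fin (n + 1)) ℝ)} (hKL : K ⊆ L) :
    copFeas Ieq Iineq Q K ⊆ copFeas Ieq Iineq Q L :=
  fun _ ⟨hK, hrest⟩ => ⟨hKL hK, hrest⟩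

lemma copVal_eq_of_subset_of_forall_exists_le {K L : Set (Matrix (Fin (n + 1)) (Fin (n + 1)) ℝ)}
    (hKL : K ⊆ L) (h : ∀ X ∈ copFeas Ieq Iineq Q L,
      ∃ X' ∈ copFeas Ieq Iineq Q K, trace (Q0 * X') ≤ trace (Q0 * X)) :
    copVal Ieq Iineq Q0 Q K = copVal Ieq Iineq Q0 Q L := by
  refine csInf_eq_csInf_of_forall_exists_le ?_ ?_
  · rintro _ ⟨X, hX, rfl⟩
    exact ⟨_, ⟨X, copFeas_mono Ieq Iineq Q hKL hX, rfl⟩, le_rfl⟩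
  · rintro _ ⟨X, hX, rfl⟩
    obtain ⟨X', hX', hle⟩ := h X hX
    exact ⟨_, ⟨X', hX', rfl⟩, hle⟩

lemma exists_mem_copFeas_Gamma_le
    (hQ0 : ∀ x : Fin (n + 1) → ℝ, x 0 = 0 → 0 ≤ x ⬝ᵥ Q0.mulVec x)
    (hQeq : ∀ p ∈ Ieq, (Q p).PosSemidef)
    (hQineq : ∀ p ∈ Iineq, ∀ x : Fin (n + 1) → ℝ, x 0 = 0 → 0 ≤ x ⬝ᵥ (Q p).mulVec x)
    {X : Matrix (Fin (n + 1)) (Fin (n + 1)) ℝ} (hX : X ∈ copFeas Ieq Iineq Q (DNN (n + 1))) :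
    ∃ X' ∈ copFeas Ieq Iineq Q (Gamma (n + 1)), trace (Q0 * X') ≤ trace (Q0 * X) := by
  obtain ⟨⟨hXpsd, hXnn⟩, hX00, hXeq, hXineq⟩ := hX
  set x := X *ᵥ Pi.single 0 1 with hx
  have hx0 : x 0 = 1 := by simpa [hx, mulVec_single_one] using hX00
  set Y := X - vecMulVec x x
  have hYpsd : Y.PosSemidef :=
    hXpsd.sub_vecMulVec_mulVec (by simpa [mulVec_single_one] using hX00)
  have hY00 : Y 0 0 = 0 := by simp [Y, vecMulVec_apply, hx0, hX00]
  have hsplit : ∀ A, trace (A * X) = x ⬝ᵥ A *ᵥ x + trace (A * Y) := fun A => by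
    rw [← trace_mul_vecMulVec_self, ← trace_add, ← Matrix.mul_add, add_sub_cancel]
  have hYnonneg : ∀ A : Matrix (Fin (n + 1)) (Fin (n + 1)) ℝ,
      (∀ v : Fin (n + 1) → ℝ, v 0 = 0 → 0 ≤ v ⬝ᵥ A *ᵥ v) → 0 ≤ trace (A * Y) :=
    fun A hA => hYpsd.trace_mul_nonneg_of_apply_self_eq_zero hY00 hA
  refine ⟨vecMulVec x x, ⟨⟨x, fun i => ?_, rfl⟩, ?_, fun p hp => ?_, fun p hp => ?_⟩, ?_⟩
  · simpa [hx, mulVec_single_one] using hXnn i 0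
  · simp [vecMulVec_apply, hx0]
  · have hxx := (hQeq p hp).dotProduct_mulVec_nonneg x
    have hY := hYnonneg (Q p) fun v _ => by simpa using (hQeq p hp).dotProduct_mulVec_nonneg v
    rw [star_trivial] at hxx
    rw [trace_mul_vecMulVec_self]
    linarith [hsplit (Q p), hXeq p hp]
  · rw [trace_mul_vecMulVec_self]
    linarith [hsplit (Q p), hXineq p hp, hYnonneg (Q p) (hQineq p hp)]
  · rw [trace_mul_vecMulVec_self]
    linarith [hsplit Q0, hYnonneg Q0 hQ0]

end COP

theorem stmt_8_general {n : ℕ} {ι : Type} (Ieq Iineq : Finset ι)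
    (Q0 : Matrix (Fin (n + 1)) (Fin (n + 1)) ℝ)
    (Q : ι → Matrix (Fin (n + 1)) (Fin (n + 1)) ℝ)
    -- Q⁰_Ñ is positive semidefinite
    (hQ0 : ∀ x : Fin (n + 1) → ℝ, x 0 = 0 → 0 ≤ x ⬝ᵥ Q0.mulVec x)
    -- Qᵖ ∈ Sⁿ₊ for p ∈ I_eq
    (hQeq : ∀ p ∈ Ieq, (Q p).PosSemidef)
    -- Qᵖ_Ñ is positive semidefinite for p ∈ I_ineq
    (hQineq : ∀ p ∈ Iineq, ∀ x : Fin (n + 1) → ℝ, x 0 = 0 → 0 ≤ x ⬝ᵥ (Q p).mulVec x) :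
    copVal Ieq Iineq Q0 Q (DNN (n + 1)) = copVal Ieq Iineq Q0 Q (CPP (n + 1)) ∧
    copVal Ieq Iineq Q0 Q (CPP (n + 1)) = copVal Ieq Iineq Q0 Q (Gamma (n + 1)) := by
  have hreduce := fun X (hX : X ∈ copFeas Ieq Iineq Q (DNN (n + 1))) =>
    exists_mem_copFeas_Gamma_le Ieq Iineq Q0 Q hQ0 hQeq hQineq hX
  have hGammaDNN : copVal Ieq Iineq Q0 Q (Gamma (n + 1)) = copVal Ieq Iineq Q0 Q (DNN (n + 1)) :=
    copVal_eq_of_subset_of_forall_exists_le Ieq Iineq Q0 Q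
      ((Gamma_subset_CPP _).trans (CPP_subset_DNN _)) hreduce
  have hGammaCPP : copVal Ieq Iineq Q0 Q (Gamma (n + 1)) = copVal Ieq Iineq Q0 Q (CPP (n + 1)) :=
    copVal_eq_of_subset_of_forall_exists_le Ieq Iineq Q0 Q (Gamma_subset_CPP _)
      fun X hX => hreduce X (copFeas_mono Ieq Iineq Q (CPP_subset_DNN _) hX)
  exact ⟨hGammaDNN.symm.trans hGammaCPP, hGammaCPP.symm⟩

theorem stmt_8 {n : ℕ} {ι : Type} (Ieq Iineq : Finset ι) (hdisj : Disjoint Ieq Iineq)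
    (Q0 : Matrix (Fin (n + 1)) (Fin (n + 1)) ℝ)
    (Q : ι → Matrix (Fin (n + 1)) (Fin (n + 1)) ℝ)
    (hQ0sym : Q0.IsSymm) (hQsym : ∀ p, (Q p).IsSymm)
    -- Q⁰_Ñ is positive semidefinite
    (hQ0 : ∀ x : Fin (n + 1) → ℝ, x 0 = 0 → 0 ≤ x ⬝ᵥ Q0.mulVec x)
    -- Qᵖ ∈ Sⁿ₊ for p ∈ I_eq
    (hQeq : ∀ p ∈ Ieq, (Q p).PosSemidef)
    -- Qᵖ_Ñ is positive semidefinite for p ∈ I_ineq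
    (hQineq : ∀ p ∈ Iineq, ∀ x : Fin (n + 1) → ℝ, x 0 = 0 → 0 ≤ x ⬝ᵥ (Q p).mulVec x) :
    copVal Ieq Iineq Q0 Q (DNN (n + 1)) = copVal Ieq Iineq Q0 Q (CPP (n + 1)) ∧
    copVal Ieq Iineq Q0 Q (CPP (n + 1)) = copVal Ieq Iineq Q0 Q (Gamma (n + 1)) :=
  stmt_8_general Ieq Iineq Q0 Q hQ0 hQeq hQineq
end

section
/- Under the assumptions Q⁰_Ñ ∈ S^{n−1}₊, Qᵖ ∈ Sⁿ₊ (p ∈ I_eq), Qᵖ_Ñ ∈ S^{n−1}₊ (p ∈ I_ineq), if X = [[1, yᵀ],[y, Y]] with y ∈ ℝ^{n−1}₊ and Y ∈ DNN^{n−1} is a feasible solution of COP(DNNⁿ), then X̄ = [[1, yᵀ],[y, yyᵀ]] is a feasible solution of COP(Γⁿ) with objective value ⟨Q⁰, X̄⟩ ≤ ⟨Q⁰, X⟩. -/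
/-!
Let `z` be the first column of `X`. Since `X` is positive semidefinite with `X₁₁ = 1`, the
Cauchy–Schwarz inequality for the form `X` shows that the Schur complement `D = X - z zᵀ` is
positive semidefinite; moreover `D₁₁ = 0`. Writing `D = ∑ vₖ vₖᵀ`, every `vₖ` vanishes in the
first coordinate, so `⟨Q, D⟩ = ∑ vₖᵀ Q vₖ ≥ 0` whenever `Q_Ñ` is positive semidefinite. Hence
passing from `X` to `X̄ = z zᵀ` does not increase `⟨Q, ·⟩` for any such `Q`, which gives the
inequality constraints and the objective bound; for `p ∈ I_eq` we also have `⟨Qᵖ, X̄⟩ = zᵀ Qᵖ z ≥ 0`.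
-/

open Matrix

namespace Matrix

variable {n : Type*} [Fintype n]

lemma trace_mul_vecMulVec {R : Type*} [CommSemiring R] (Q : Matrix n n R) (a b : n → R) :
    trace (Q * vecMulVec a b) = b ⬝ᵥ Q *ᵥ a := by
  rw [mul_vecMulVec, trace_vecMulVec, dotProduct_comm]

lemma PosSemidef.dotProduct_mulVec_mul_le {X : Matrix n n ℝ} (hX : X.PosSemidef) (x y : n → ℝ) :
    (x ⬝ᵥ X *ᵥ y) * (y ⬝ᵥ X *ᵥ x) ≤ (x ⬝ᵥ X *ᵥ x) * (y ⬝ᵥ X *ᵥ y) := by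
  classical
  simpa only [toLinearMap₂'_apply'] using
    LinearMap.BilinForm.apply_mul_apply_le_of_forall_zero_le (toLinearMap₂' ℝ X)
      (fun v => by simpa only [toLinearMap₂'_apply', star_trivial] using
        hX.dotProduct_mulVec_nonneg v) x y

lemma PosSemidef.smul_sub_vecMulVec_col {X : Matrix n n ℝ} (hX : X.PosSemidef) (i : n) :
    (X i i • X - vecMulVec (fun j => X j i) (fun j => X j i)).PosSemidef := by
  classical
  set c : n → ℝ := fun j => X j i
  have hc : X *ᵥ Pi.single i 1 = c := by rw [mulVec_single_one]; rfl
  refine .of_dotProduct_mulVec_nonneg ?_ fun v => ?_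
  · refine (hX.isHermitian.smul (IsSelfAdjoint.all _)).sub ?_
    simpa only [star_trivial] using (posSemidef_vecMulVec_self_star c).isHermitian
  · have hsymm : Pi.single i 1 ⬝ᵥ X *ᵥ v = v ⬝ᵥ c := by
      conv_lhs => rw [← hX.isHermitian.eq]
      rw [← hc, dotProduct_mulVec, conjTranspose_eq_transpose_of_trivial, vecMul_transpose,
        dotProduct_comm]
    have hii : Pi.single i 1 ⬝ᵥ X *ᵥ Pi.single i 1 = X i i := by
      rw [hc, single_one_dotProduct]
    have cauchySchwarz := hX.dotProduct_mulVec_mul_le (Pi.single i 1) v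
    rw [hsymm, hii, hc] at cauchySchwarz
    simp only [star_trivial, sub_mulVec, smul_mulVec, dotProduct_sub, dotProduct_smul,
      vecMulVec_mulVec, op_smul_eq_mul, smul_eq_mul, dotProduct_comm c v]
    linarith

lemma PosSemidef.trace_mul_nonneg_of_diag_eq_zero {Q D : Matrix n n ℝ} (hD : D.PosSemidef)
    {i : n} (hDi : D i i = 0) (hQ : ∀ x : n → ℝ, x i = 0 → 0 ≤ x ⬝ᵥ Q *ᵥ x) :
    0 ≤ trace (Q * D) := by
  obtain ⟨m, v, rfl⟩ := posSemidef_iff_eq_sum_vecMulVec.mp hD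
  simp only [star_trivial] at hDi ⊢
  have hvi : ∀ k, v k i = 0 := by
    simp only [sum_apply, vecMulVec_apply] at hDi
    intro k
    exact mul_self_eq_zero.mp <| (Finset.sum_eq_zero_iff_of_nonneg fun k _ =>
      mul_self_nonneg (v k i)).mp hDi k (Finset.mem_univ k)
  rw [Finset.mul_sum, trace_sum]
  exact Finset.sum_nonneg fun k _ => (trace_mul_vecMulVec Q (v k) (v k)).symm ▸ hQ _ (hvi k)

lemma PosSemidef.trace_mul_vecMulVec_col_le {Q X : Matrix n n ℝ} (hX : X.PosSemidef) {i : n}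
    (hXi : X i i = 1) (hQ : ∀ x : n → ℝ, x i = 0 → 0 ≤ x ⬝ᵥ Q *ᵥ x) :
    trace (Q * vecMulVec (fun j => X j i) (fun j => X j i)) ≤ trace (Q * X) := by
  have hD := hX.smul_sub_vecMulVec_col i
  rw [hXi, one_smul] at hD
  have := hD.trace_mul_nonneg_of_diag_eq_zero (i := i) (by simp [hXi, vecMulVec_apply]) hQ
  rwa [mul_sub, trace_sub, sub_nonneg] at this

end Matrix

theorem stmt_9_general {n : ℕ} {ι : Type} (Ieq Iineq : Finset ι)
    (Q0 : Matrix (Fin (n + 1)) (Fin (n + 1)) ℝ)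
    (Q : ι → Matrix (Fin (n + 1)) (Fin (n + 1)) ℝ)
    -- Q⁰_Ñ is positive semidefinite
    (hQ0 : ∀ x : Fin (n + 1) → ℝ, x 0 = 0 → 0 ≤ x ⬝ᵥ Q0.mulVec x)
    -- Qᵖ ∈ Sⁿ₊ for p ∈ I_eq
    (hQeq : ∀ p ∈ Ieq, (Q p).PosSemidef)
    -- Qᵖ_Ñ is positive semidefinite for p ∈ I_ineq
    (hQineq : ∀ p ∈ Iineq, ∀ x : Fin (n + 1) → ℝ, x 0 = 0 → 0 ≤ x ⬝ᵥ (Q p).mulVec x)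
    -- X = [[1, yᵀ],[y, Y]] is a feasible solution of COP(DNN)
    (X : Matrix (Fin (n + 1)) (Fin (n + 1)) ℝ)
    (hXdnn : X ∈ DNN (n + 1)) (hX11 : X 0 0 = 1)
    (hfeq : ∀ p ∈ Ieq, trace (Q p * X) = 0)
    (hfineq : ∀ p ∈ Iineq, trace (Q p * X) ≤ 0) :
    -- X̄ = [[1, yᵀ],[y, yyᵀ]] = zzᵀ with z the first column of X
    let z : Fin (n + 1) → ℝ := fun i => X i 0
    let Xbar := vecMulVec z z
    Xbar ∈ Gamma (n + 1) ∧ Xbar 0 0 = 1 ∧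
      (∀ p ∈ Ieq, trace (Q p * Xbar) = 0) ∧
      (∀ p ∈ Iineq, trace (Q p * Xbar) ≤ 0) ∧
      trace (Q0 * Xbar) ≤ trace (Q0 * X) := by
  intro z Xbar
  obtain ⟨hXpsd, hXnn⟩ := hXdnn
  have rounding_le := fun Q' hQ' => hXpsd.trace_mul_vecMulVec_col_le (Q := Q') hX11 hQ'
  refine ⟨⟨z, fun i => hXnn i 0, rfl⟩, by simp [Xbar, z, vecMulVec_apply, hX11], fun p hp => ?_,
    fun p hp => (rounding_le _ (hQineq p hp)).trans (hfineq p hp), rounding_le _ hQ0⟩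
  have hpsd : ∀ x, 0 ≤ x ⬝ᵥ Q p *ᵥ x := fun x => by
    simpa only [star_trivial] using (hQeq p hp).dotProduct_mulVec_nonneg x
  refine le_antisymm ((rounding_le _ fun x _ => hpsd x).trans (hfeq p hp).le) ?_
  rw [trace_mul_vecMulVec]
  exact hpsd z

theorem stmt_9 {n : ℕ} {ι : Type} (Ieq Iineq : Finset ι) (hdisj : Disjoint Ieq Iineq)
    (Q0 : Matrix (Fin (n + 1)) (Fin (n + 1)) ℝ)
    (Q : ι → Matrix (Fin (n + 1)) (Fin (n + 1)) ℝ)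
    (hQ0sym : Q0.IsSymm) (hQsym : ∀ p, (Q p).IsSymm)
    -- Q⁰_Ñ is positive semidefinite
    (hQ0 : ∀ x : Fin (n + 1) → ℝ, x 0 = 0 → 0 ≤ x ⬝ᵥ Q0.mulVec x)
    -- Qᵖ ∈ Sⁿ₊ for p ∈ I_eq
    (hQeq : ∀ p ∈ Ieq, (Q p).PosSemidef)
    -- Qᵖ_Ñ is positive semidefinite for p ∈ I_ineq
    (hQineq : ∀ p ∈ Iineq, ∀ x : Fin (n + 1) → ℝ, x 0 = 0 → 0 ≤ x ⬝ᵥ (Q p).mulVec x)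
    -- X = [[1, yᵀ],[y, Y]] is a feasible solution of COP(DNN)
    (X : Matrix (Fin (n + 1)) (Fin (n + 1)) ℝ)
    (hXdnn : X ∈ DNN (n + 1)) (hX11 : X 0 0 = 1)
    (hfeq : ∀ p ∈ Ieq, trace (Q p * X) = 0)
    (hfineq : ∀ p ∈ Iineq, trace (Q p * X) ≤ 0) :
    -- X̄ = [[1, yᵀ],[y, yyᵀ]] = zzᵀ with z the first column of X
    let z : Fin (n + 1) → ℝ := fun i => X i 0
    let Xbar := vecMulVec z z
    Xbar ∈ Gamma (n + 1) ∧ Xbar 0 0 = 1 ∧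
      (∀ p ∈ Ieq, trace (Q p * Xbar) = 0) ∧
      (∀ p ∈ Iineq, trace (Q p * Xbar) ≤ 0) ∧
      trace (Q0 * Xbar) ≤ trace (Q0 * X) :=
  stmt_9_general Ieq Iineq Q0 Q hQ0 hQeq hQineq X hXdnn hX11 hfeq hfineq
end

section
/- Let K ∈ {Γⁿ, CPPⁿ, DNNⁿ} and suppose the aggregated sparsity condition {(i,j) : Qᵖᵢⱼ ≠ 0} ⊆ Ē holds for all p ∈ {0} ∪ I_eq ∪ I_ineq, where Ē = E ∪ {(i,i) : i ∈ N} and G(N,E) is a block-clique graph with maximal cliques C₁,…,C_ℓ. Then the optimal value ζ(K) of COP(K) equals the optimal value η(K) of the decomposed problem in which the cone constraint X ∈ K is replaced by the constraints X_{C_q} ∈ K^{C_q} for q = 1,…,ℓ. -/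
open Matrix SimpleGraph

/-- X_C ∈ Γ^C. -/
def GammaOn {n : ℕ} (X : Matrix (Fin n) (Fin n) ℝ) (C : Set (Fin n)) : Prop :=
  ∃ y : Fin n → ℝ, (∀ i, 0 ≤ y i) ∧ ∀ i ∈ C, ∀ j ∈ C, X i j = y i * y j

/-- X_C ∈ CPP^C. -/
def IsCPOn {n : ℕ} (X : Matrix (Fin n) (Fin n) ℝ) (C : Set (Fin n)) : Prop :=
  ∃ (m : ℕ) (y : Fin m → Fin n → ℝ), (∀ k i, 0 ≤ y k i) ∧
    ∀ i ∈ C, ∀ j ∈ C, X i j = ∑ k, y k i * y k j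

/-- X_C ∈ DNN^C. -/
def IsDNNOn {n : ℕ} (X : Matrix (Fin n) (Fin n) ℝ) (C : Set (Fin n)) : Prop :=
  (∀ i ∈ C, ∀ j ∈ C, 0 ≤ X i j) ∧
    ∀ x : Fin n → ℝ, (∀ i, i ∉ C → x i = 0) → 0 ≤ x ⬝ᵥ X.mulVec x

/-!
Every constraint and the objective read only the entries of `X` in `Ē`, and each entry of `Ē`
lies in a clique block, so it suffices to complete a matrix whose clique blocks lie in `K` to a
matrix of `K` with the same clique blocks. For `Γ` the rank-one matrix built from the square
roots of the diagonal does it. `CPP` and `DNN` are the nonnegative matrices that are sums of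
`y yᵀ` with `y` nonnegative, resp. arbitrary (`IsGramOn (Set.Ici 0)`, resp. `IsGramOn Set.univ`),
and two such blocks sharing at most one vertex `v` glue: if `X₁ v v > 0`, divide by it the
Hadamard product of `X₁` and `X₂` whose missing rows and columns are copies of those of `v`;
otherwise add the zero-extended blocks. Chordality and the block-clique property put every cycle
of `G` inside one maximal clique (split the cycle at a chord), so in any family of maximal
cliques one meets the union of the others in at most one vertex, and the blocks can be glued one
such leaf at a time.
-/

section Cycle

variable {V : Type} {G : SimpleGraph V}

def pathWalk (w : ℕ → V) : ∀ k, (∀ j < k, G.Adj (w j) (w (j + 1))) → G.Walk (w 0) (w k)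
  | 0, _ => .nil
  | k + 1, h => (pathWalk w k fun j hj => h j (Nat.lt_succ_of_lt hj)).concat (h k k.lt_succ_self)

theorem pathWalk_support (w : ℕ → V) :
    ∀ k (h : ∀ j < k, G.Adj (w j) (w (j + 1))),
      (pathWalk w k h).support = (List.range (k + 1)).map w
  | 0, _ => rfl
  | k + 1, h => by
    rw [pathWalk, Walk.support_concat, pathWalk_support w k, List.range_succ (n := k + 1)]
    simp

theorem pathWalk_edges (w : ℕ → V) :
    ∀ k (h : ∀ j < k, G.Adj (w j) (w (j + 1))),
      (pathWalk w k h).edges = (List.range k).map fun j => s(w j, w (j + 1))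
  | 0, _ => rfl
  | k + 1, h => by
    rw [pathWalk, Walk.edges_concat, pathWalk_edges w k, List.range_succ (n := k)]
    simp

theorem pathWalk_length (w : ℕ → V) :
    ∀ k (h : ∀ j < k, G.Adj (w j) (w (j + 1))), (pathWalk w k h).length = k
  | 0, _ => rfl
  | k + 1, h => by rw [pathWalk, Walk.length_concat, pathWalk_length w k]

theorem isCycle_cons_pathWalk {w : ℕ → V} {m : ℕ} (hm : 3 ≤ m) (hinj : Set.InjOn w (Set.Iic m))
    (hadj : ∀ j < m, G.Adj (w j) (w (j + 1))) (hlast : G.Adj (w m) (w 0)) :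
    (Walk.cons hlast (pathWalk w m hadj)).IsCycle := by
  have hw : ∀ {a b}, a ≤ m → b ≤ m → w a = w b → a = b := fun ha hb h => hinj ha hb h
  refine (Walk.cons_isCycle_iff _ hlast).2 ⟨?_, ?_⟩
  · rw [Walk.isPath_def, pathWalk_support]
    exact List.nodup_range.map_on fun a ha b hb => hw (by simp at ha; omega) (by simp at hb; omega)
  · simp only [pathWalk_edges, List.mem_map, List.mem_range, not_exists, not_and]
    intro j hj h
    rcases Sym2.eq_iff.1 h with ⟨h1, -⟩ | ⟨h1, h2⟩
    · have := hw (by omega) le_rfl h1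
      omega
    · have := hw (by omega) (Nat.zero_le m) h1
      have := hw (by omega) le_rfl h2
      omega

theorem IsChordal.exists_chord (hG : IsChordal G) {w : ℕ → V} {m : ℕ} (hm : 3 ≤ m)
    (hinj : Set.InjOn w (Set.Iic m)) (hadj : ∀ j < m, G.Adj (w j) (w (j + 1)))
    (hlast : G.Adj (w m) (w 0)) :
    ∃ i j, i + 1 < j ∧ j ≤ m ∧ (i = 0 → j < m) ∧ G.Adj (w i) (w j) := by
  set p := pathWalk w m hadj
  have hlen : 4 ≤ (Walk.cons hlast p).length := by
    rw [Walk.length_cons, pathWalk_length]; omega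
  obtain ⟨x, y, hx, hy, hxy, hchord⟩ := hG _ _ (isCycle_cons_pathWalk hm hinj hadj hlast) hlen
  have hsupp : ∀ z ∈ (Walk.cons hlast p).support, ∃ i ≤ m, w i = z := by
    intro z hz
    simp only [p, Walk.support_cons, pathWalk_support, List.mem_cons, List.mem_map,
      List.mem_range] at hz
    rcases hz with rfl | ⟨i, hi, rfl⟩
    exacts [⟨m, le_rfl, rfl⟩, ⟨i, by omega, rfl⟩]
  have hedge : ∀ i j, i < j → j ≤ m → (j = i + 1 ∨ i = 0 ∧ j = m) →
      s(w i, w j) ∈ (Walk.cons hlast p).edges := by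
    rintro i j - hj (rfl | ⟨rfl, rfl⟩)
    · simp only [p, Walk.edges_cons, pathWalk_edges, List.mem_cons, List.mem_map, List.mem_range]
      exact Or.inr ⟨i, by omega, rfl⟩
    · simp [Sym2.eq_swap]
  obtain ⟨i, hi, rfl⟩ := hsupp x hx
  obtain ⟨j, hj, rfl⟩ := hsupp y hy
  rcases lt_trichotomy i j with hij | rfl | hij
  · exact ⟨i, j, by grind, hj, by grind, hxy⟩
  · exact absurd rfl hxy.ne
  · rw [Sym2.eq_swap] at hchord
    exact ⟨j, i, by grind, hi, by grind, hxy.symm⟩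

end Cycle

theorem exists_lt_eq_injOn_Iio {α : Type} [Finite α] (f : ℕ → α) :
    ∃ a b, a < b ∧ f a = f b ∧ Set.InjOn f (Set.Iio b) := by
  have hrep : ∃ b a, a < b ∧ f a = f b := by
    obtain ⟨a, b, hab, h⟩ := Finite.exists_ne_map_eq_of_infinite f
    rcases hab.lt_or_gt with hab | hab
    exacts [⟨b, a, hab, h⟩, ⟨a, b, hab, h.symm⟩]
  classical
  obtain ⟨a, hab, h⟩ := Nat.find_spec hrep
  refine ⟨a, Nat.find hrep, hab, h, fun x hx y hy hxy => ?_⟩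
  by_contra hne
  rcases Ne.lt_or_gt hne with hlt | hlt
  exacts [Nat.find_min hrep hy ⟨x, hlt, hxy⟩, Nat.find_min hrep hx ⟨y, hlt, hxy.symm⟩]

structure IsBlockClique {V ι : Type} [DecidableEq V] (G : SimpleGraph V) (C : ι → Finset V) :
    Prop where
  chordal : IsChordal G
  isMaxClique : ∀ q, IsMaxClique G (C q : Set V)
  exists_eq : ∀ s : Finset V, IsMaxClique G (s : Set V) → ∃ q, C q = s
  card_inter_le_one : ∀ q r, q ≠ r → (C q ∩ C r).card ≤ 1

namespace IsBlockClique

variable {V ι : Type} [DecidableEq V] {G : SimpleGraph V} {C : ι → Finset V}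

theorem adj (hC : IsBlockClique G C) {q : ι} {a b : V} (ha : a ∈ C q) (hb : b ∈ C q)
    (hab : a ≠ b) : G.Adj a b :=
  (hC.isMaxClique q).1 (Finset.mem_coe.2 ha) (Finset.mem_coe.2 hb) hab

theorem eq_of_mem (hC : IsBlockClique G C) {q r : ι} {a b : V} (hab : a ≠ b)
    (haq : a ∈ C q) (hbq : b ∈ C q) (har : a ∈ C r) (hbr : b ∈ C r) : q = r := by
  by_contra hqr
  exact hab (Finset.card_le_one.1 (hC.card_inter_le_one q r hqr) a (Finset.mem_inter.2 ⟨haq, har⟩)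
    b (Finset.mem_inter.2 ⟨hbq, hbr⟩))

theorem exists_subset [Finite V] (hC : IsBlockClique G C) {s : Finset V}
    (hs : G.IsClique (s : Set V)) : ∃ q, s ⊆ C q := by
  obtain ⟨t, hst, ht⟩ := (Set.toFinite {t : Set V | G.IsClique t}).exists_le_maximal hs
  obtain ⟨q, hq⟩ := hC.exists_eq t.toFinite.toFinset
    ⟨by simpa using ht.prop, fun u hu htu => by
      simpa using (ht.eq_of_le hu (by simpa using htu)).symm⟩
  exact ⟨q, by simpa [hq] using hst⟩

theorem exists_mem_mem [Finite V] (hC : IsBlockClique G C) {a b : V} (hab : a = b ∨ G.Adj a b) :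
    ∃ q, a ∈ C q ∧ b ∈ C q := by
  have hs : G.IsClique (({a, b} : Finset V) : Set V) := by
    rcases hab with rfl | hab
    · simp
    · simpa using G.isClique_pair.2 fun _ => hab
  obtain ⟨q, hq⟩ := hC.exists_subset hs
  exact ⟨q, hq (by simp), hq (by simp)⟩

theorem exists_forall_mem_of_cycle_of_lt_three [Finite V] (hC : IsBlockClique G C) {m : ℕ}
    (hm : m < 3) {w : ℕ → V} (hadj : ∀ j < m, G.Adj (w j) (w (j + 1)))
    (hlast : G.Adj (w m) (w 0)) : ∃ q, ∀ i ≤ m, w i ∈ C q := by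
  have hclique : G.IsClique (((Finset.range (m + 1)).image w : Finset V) : Set V) := by
    intro x hx y hy hxy
    simp only [Finset.coe_image, Finset.coe_range, Set.mem_image, Set.mem_Iio] at hx hy
    obtain ⟨a, ha, rfl⟩ := hx
    obtain ⟨b, hb, rfl⟩ := hy
    have hab : a ≠ b := fun h => hxy (h ▸ rfl)
    rcases (by omega : b = a + 1 ∨ a = b + 1 ∨ a = 0 ∧ b = m ∨ a = m ∧ b = 0) with
      rfl | rfl | ⟨rfl, rfl⟩ | ⟨rfl, rfl⟩
    exacts [hadj a (by omega), (hadj b (by omega)).symm, hlast.symm, hlast]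
  obtain ⟨q, hq⟩ := hC.exists_subset hclique
  exact ⟨q, fun i hi => hq (Finset.mem_image_of_mem w (Finset.mem_range.2 (by omega)))⟩

theorem exists_forall_mem_of_cycle [Finite V] (hC : IsBlockClique G C) {m : ℕ} {w : ℕ → V}
    (hinj : Set.InjOn w (Set.Iic m)) (hadj : ∀ j < m, G.Adj (w j) (w (j + 1)))
    (hlast : G.Adj (w m) (w 0)) : ∃ q, ∀ i ≤ m, w i ∈ C q := by
  induction m using Nat.strong_induction_on generalizing w with
  | _ m ih =>
  rcases Nat.lt_or_ge m 3 with hm3 | hm3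
  · exact hC.exists_forall_mem_of_cycle_of_lt_three hm3 hadj hlast
  obtain ⟨i, j, hij, hjm, hi0, hchord⟩ := hC.chordal.exists_chord hm3 hinj hadj hlast
  -- the chord splits the cycle into `w i, …, w j` and `w 0, …, w i, w j, …, w m`
  obtain ⟨q, hq⟩ := ih (j - i) (by omega) (w := fun k => w (i + k))
    (fun a ha b hb h => by have := hinj (by grind) (by grind) h; omega)
    (fun k hk => hadj (i + k) (by omega))
    (by simpa [show i + (j - i) = j by omega] using hchord.symm)
  set d := j - i - 1
  obtain ⟨r, hr⟩ := ih (m - d) (by omega)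
    (w := fun k => if k ≤ i then w k else w (k + d))
    (fun a ha b hb h => by
      simp only [Set.mem_Iic] at ha hb
      dsimp only at h
      split_ifs at h <;> have := hinj (by grind) (by grind) h <;> omega)
    (fun k hk => by
      rcases lt_trichotomy k i with hki | rfl | hki
      · simpa [hki.le, show k + 1 ≤ i by omega] using hadj k (by omega)
      · simpa [show k + 1 + d = j by omega] using hchord
      · simpa [show ¬k ≤ i by omega, show ¬k < i by omega, show k + 1 + d = k + d + 1 by omega]
          using hadj (k + d) (by omega))
    (by simpa [show ¬m - d ≤ i by omega, show m - d + d = m by omega] using hlast)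
  have hqr : q = r := by
    have hjq : w j ∈ C q := by simpa [show i + (j - i) = j by omega] using hq (j - i) le_rfl
    have hir : w i ∈ C r := by simpa using hr i (by omega)
    have hjr : w j ∈ C r := by
      simpa [show ¬i + 1 ≤ i by omega, show i + 1 + d = j by omega] using hr (i + 1) (by omega)
    exact hC.eq_of_mem hchord.ne (by simpa using hq 0 (by omega)) hjq hir hjr
  subst hqr
  refine ⟨q, fun k hk => ?_⟩
  by_cases hik : i ≤ k ∧ k ≤ j
  · simpa [show i + (k - i) = k by omega] using hq (k - i) (by omega)
  by_cases hki : k ≤ i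
  · simpa [hki] using hr k (by omega)
  · simpa [show ¬k - d ≤ i by omega, show k - d + d = k by omega] using hr (k - d) (by omega)

theorem false_of_cliqueChain [Finite V] (hC : IsBlockClique G C) (w : ℕ → V) (t : ℕ → ι)
    (hw : ∀ n, w n ∈ C (t n) ∧ w n ∈ C (t (n + 1))) (ht : ∀ n, t (n + 1) ≠ t n)
    (hw' : ∀ n, w (n + 1) ≠ w n) : False := by
  obtain ⟨a, b, hab, hwab, hinj⟩ := exists_lt_eq_injOn_Iio w
  have hb : a + 2 ≤ b := by
    by_contra h
    exact hw' a (by rw [show a + 1 = b by omega, hwab])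
  have hadj : ∀ n, G.Adj (w n) (w (n + 1)) := fun n => hC.adj (hw n).2 (hw (n + 1)).1 (hw' n).symm
  obtain ⟨q, hq⟩ := hC.exists_forall_mem_of_cycle (m := b - 1 - a)
    (w := fun k => w (a + k)) (fun x hx y hy h => by have := hinj (by grind) (by grind) h; omega)
    (fun k _ => hadj (a + k))
    (by simpa [show a + (b - 1 - a) + 1 = b by omega, ← hwab] using hadj (a + (b - 1 - a)))
  have hwq : ∀ n, a ≤ n → n ≤ b → w n ∈ C q := by
    intro n han hnb
    rcases hnb.lt_or_eq with hnb | rfl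
    · simpa [show a + (n - a) = n by omega] using hq (n - a) (by omega)
    · simpa [← hwab] using hq 0 (by omega)
  have htq : ∀ n, a ≤ n → n + 1 ≤ b → t (n + 1) = q := fun n han hnb =>
    hC.eq_of_mem (hw' n).symm (hw n).2 (hw (n + 1)).1 (hwq n han (by omega))
      (hwq (n + 1) (by omega) hnb)
  exact ht (a + 1) ((htq (a + 1) (by omega) (by omega)).trans (htq a le_rfl (by omega)).symm)

theorem exists_leaf [Finite V] [DecidableEq ι] (hC : IsBlockClique G C) (S : Finset ι)
    (hS : S.Nonempty) :
    ∃ q ∈ S, (C q ∩ (S.erase q).biUnion C).card ≤ 1 := by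
  by_contra! hcon
  let Shared : ι × V → Prop := fun p => p.1 ∈ S ∧ p.2 ∈ C p.1 ∧ ∃ r ∈ S, r ≠ p.1 ∧ p.2 ∈ C r
  have hshared : ∀ q ∈ S, ∀ v ∈ C q ∩ (S.erase q).biUnion C, Shared (q, v) := by
    intro q hq v hv
    simp only [Finset.mem_inter, Finset.mem_biUnion, Finset.mem_erase] at hv
    obtain ⟨hvq, r, ⟨hrq, hr⟩, hvr⟩ := hv
    exact ⟨hq, hvq, r, hr, hrq, hvr⟩
  -- from a shared vertex `v` of `C q`, move to another clique `C r` containing `v`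
  -- and to a shared vertex of `C r` other than `v`
  have hstep : ∀ p, ∃ p', Shared p → Shared p' ∧ p'.1 ≠ p.1 ∧ p.2 ∈ C p'.1 ∧ p'.2 ≠ p.2 := by
    rintro ⟨q, v⟩
    by_cases hp : Shared (q, v)
    swap
    · exact ⟨(q, v), fun h => (hp h).elim⟩
    obtain ⟨-, -, r, hr, hrq, hvr⟩ := hp
    obtain ⟨x, hx, y, hy, hxy⟩ := Finset.one_lt_card.1 (hcon r hr)
    by_cases hxv : x = v
    · exact ⟨(r, y), fun _ => ⟨hshared r hr y hy, hrq, hvr, hxv ▸ hxy.symm⟩⟩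
    · exact ⟨(r, x), fun _ => ⟨hshared r hr x hx, hrq, hvr, hxv⟩⟩
  choose f hf using hstep
  obtain ⟨q₀, hq₀⟩ := hS
  obtain ⟨v₀, hv₀, -⟩ := Finset.one_lt_card.1 (hcon q₀ hq₀)
  set p : ℕ → ι × V := fun n => f^[n] (q₀, v₀)
  have hsucc : ∀ n, p (n + 1) = f (p n) := fun n => Function.iterate_succ_apply' f n _
  have hp : ∀ n, Shared (p n) := by
    intro n
    induction n with
    | zero => exact hshared q₀ hq₀ v₀ hv₀
    | succ n ih => rw [hsucc]; exact (hf _ ih).1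
  refine hC.false_of_cliqueChain (fun n => (p n).2) (fun n => (p n).1)
    (fun n => ⟨(hp n).2.1, ?_⟩) (fun n => ?_) (fun n => ?_)
  all_goals rw [hsucc]
  exacts [(hf _ (hp n)).2.2.1, (hf _ (hp n)).2.1, (hf _ (hp n)).2.2.2]

end IsBlockClique

section Gram

variable {V : Type}

def IsGramOn (s : Set ℝ) (X : Matrix V V ℝ) (A : Finset V) : Prop :=
  ∃ (κ : Type) (_ : Fintype κ) (y : κ → V → ℝ), (∀ k i, y k i ∈ s) ∧
    ∀ i ∈ A, ∀ j ∈ A, X i j = ∑ k, y k i * y k j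

def principalBlock [DecidableEq V] (A : Finset V) (X : Matrix V V ℝ) : Matrix V V ℝ :=
  of fun i j => if i ∈ A ∧ j ∈ A then X i j else 0

namespace IsGramOn

variable {s : Set ℝ} {X Y : Matrix V V ℝ} {A D : Finset V}

theorem mono (hX : IsGramOn s X A) (hDA : D ⊆ A) : IsGramOn s X D := by
  obtain ⟨κ, _, y, hy, hXy⟩ := hX
  exact ⟨κ, inferInstance, y, hy, fun i hi j hj => hXy i (hDA hi) j (hDA hj)⟩

theorem add (hX : IsGramOn s X A) (hY : IsGramOn s Y A) : IsGramOn s (X + Y) A := by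
  obtain ⟨κ, _, x, hx, hXx⟩ := hX
  obtain ⟨μ, _, y, hy, hYy⟩ := hY
  refine ⟨κ ⊕ μ, inferInstance, Sum.elim x y, fun k i => ?_, fun i hi j hj => ?_⟩
  · cases k <;> simp [hx, hy]
  · rw [Matrix.add_apply, hXx i hi j hj, hYy i hi j hj, Fintype.sum_sum_type]
    rfl

theorem hadamard (hmul : ∀ a ∈ s, ∀ b ∈ s, a * b ∈ s) (hX : IsGramOn s X A)
    (hY : IsGramOn s Y A) : IsGramOn s (X ⊙ Y) A := by
  obtain ⟨κ, _, x, hx, hXx⟩ := hX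
  obtain ⟨μ, _, y, hy, hYy⟩ := hY
  refine ⟨κ × μ, inferInstance, fun p i => x p.1 i * y p.2 i,
    fun p i => hmul _ (hx _ _) _ (hy _ _), fun i hi j hj => ?_⟩
  rw [hadamard_apply, hXx i hi j hj, hYy i hi j hj, Finset.sum_mul_sum, ← Finset.univ_product_univ,
    Finset.sum_product]
  exact Finset.sum_congr rfl fun _ _ => Finset.sum_congr rfl fun _ _ => by ring

theorem smul (hs0 : Set.Ici 0 ⊆ s) (hmul : ∀ a ∈ s, ∀ b ∈ s, a * b ∈ s) {r : ℝ} (hr : 0 ≤ r)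
    (hX : IsGramOn s X A) : IsGramOn s (r • X) A := by
  obtain ⟨κ, _, x, hx, hXx⟩ := hX
  refine ⟨κ, inferInstance, fun k i => √r * x k i,
    fun k i => hmul _ (hs0 (Real.sqrt_nonneg r)) _ (hx k i),
    fun i hi j hj => ?_⟩
  have hrr : √r * √r = r := Real.mul_self_sqrt hr
  rw [Matrix.smul_apply, hXx i hi j hj, smul_eq_mul, Finset.mul_sum]
  exact Finset.sum_congr rfl fun k _ => by linear_combination (-(x k i * x k j)) * hrr

theorem submatrix (hX : IsGramOn s X A) (ρ : V → V) (hρ : ∀ i ∈ D, ρ i ∈ A) :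
    IsGramOn s (X.submatrix ρ ρ) D := by
  obtain ⟨κ, _, x, hx, hXx⟩ := hX
  exact ⟨κ, inferInstance, fun k i => x k (ρ i), fun k i => hx k _,
    fun i hi j hj => hXx _ (hρ i hi) _ (hρ j hj)⟩

theorem principalBlock [DecidableEq V] (h0 : (0 : ℝ) ∈ s) (hX : IsGramOn s X A) :
    IsGramOn s (principalBlock A X) D := by
  obtain ⟨κ, _, x, hx, hXx⟩ := hX
  refine ⟨κ, inferInstance, fun k i => if i ∈ A then x k i else 0, fun k i => ?_, fun i _ j _ => ?_⟩
  · dsimp only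
    split_ifs
    exacts [hx k i, h0]
  · by_cases hi : i ∈ A <;> by_cases hj : j ∈ A <;> simp [_root_.principalBlock, hi, hj, hXx]

end IsGramOn

theorem isGramOn_univ_iff [Fintype V] {s : Set ℝ} {X : Matrix V V ℝ} :
    IsGramOn s X Finset.univ ↔ ∃ (κ : Type) (_ : Fintype κ) (y : κ → V → ℝ),
      (∀ k i, y k i ∈ s) ∧ X = ∑ k, vecMulVec (y k) (y k) := by
  have (κ : Type) (_ : Fintype κ) (y : κ → V → ℝ) :
      (∀ i ∈ Finset.univ, ∀ j ∈ Finset.univ, X i j = ∑ k, y k i * y k j) ↔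
        X = ∑ k, vecMulVec (y k) (y k) := by
    simp [← Matrix.ext_iff, Matrix.sum_apply, vecMulVec_apply]
  simp only [IsGramOn, this]

theorem IsGramOn.isSymm [Fintype V] {s : Set ℝ} {X : Matrix V V ℝ}
    (hX : IsGramOn s X Finset.univ) : X.IsSymm := by
  obtain ⟨κ, _, y, -, rfl⟩ := isGramOn_univ_iff.1 hX
  simp [IsSymm, transpose_sum, transpose_vecMulVec]

theorem IsGramOn.posSemidef [Fintype V] {s : Set ℝ} {X : Matrix V V ℝ}
    (hX : IsGramOn s X Finset.univ) : X.PosSemidef := by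
  obtain ⟨κ, _, y, -, rfl⟩ := isGramOn_univ_iff.1 hX
  exact posSemidef_sum _ fun k _ => by simpa using posSemidef_vecMulVec_self_star (y k)

theorem dotProduct_principalBlock_mulVec [Fintype V] [DecidableEq V] (A : Finset V)
    (X : Matrix V V ℝ) (x : V → ℝ) :
    x ⬝ᵥ principalBlock A X *ᵥ x =
      (fun i => if i ∈ A then x i else 0) ⬝ᵥ X *ᵥ (fun i => if i ∈ A then x i else 0) := by
  simp only [dotProduct, mulVec, principalBlock, of_apply, Finset.mul_sum]
  refine Finset.sum_congr rfl fun i _ => Finset.sum_congr rfl fun j _ => ?_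
  by_cases hi : i ∈ A <;> by_cases hj : j ∈ A <;> simp [hi, hj]

end Gram

section Glue

variable {V : Type}

def AgreeOn (A : Finset V) (Y X : Matrix V V ℝ) : Prop :=
  ∀ i ∈ A, ∀ j ∈ A, Y i j = X i j

def IsNonnegGramOn (s : Set ℝ) (X : Matrix V V ℝ) (A : Finset V) : Prop :=
  IsGramOn s X A ∧ ∀ i ∈ A, ∀ j ∈ A, 0 ≤ X i j

theorem isNonnegGramOn_empty (s : Set ℝ) (X : Matrix V V ℝ) :
    IsNonnegGramOn s X ∅ :=
  ⟨⟨Empty, inferInstance, Empty.elim, fun k => k.elim, by simp⟩, by simp⟩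

theorem IsGramOn.isNonnegGramOn {X : Matrix V V ℝ} {A : Finset V}
    (hX : IsGramOn (Set.Ici 0) X A) : IsNonnegGramOn (Set.Ici 0) X A := by
  refine ⟨hX, fun i hi j hj => ?_⟩
  obtain ⟨κ, _, y, hy, hXy⟩ := hX
  rw [hXy i hi j hj]
  exact Finset.sum_nonneg fun k _ => mul_nonneg (hy k i) (hy k j)

namespace IsNonnegGramOn

variable [DecidableEq V] {s : Set ℝ} {X₁ X₂ : Matrix V V ℝ} {A B : Finset V}

theorem exists_glue_of_pos (hs0 : Set.Ici 0 ⊆ s) (hmul : ∀ a ∈ s, ∀ b ∈ s, a * b ∈ s)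
    (h₁ : IsNonnegGramOn s X₁ A) (h₂ : IsNonnegGramOn s X₂ B) {v : V} (hvA : v ∈ A)
    (hvB : v ∈ B) (hAB : ∀ i ∈ A, i ∈ B → i = v) (hc : 0 < X₁ v v) (hdiag : X₁ v v = X₂ v v) :
    ∃ Y, IsNonnegGramOn s Y (A ∪ B) ∧ AgreeOn A Y X₁ ∧ AgreeOn B Y X₂ := by
  -- `ρ` and `τ` fill the rows and columns missing from `A`, resp. `B`, with copies of those of `v`
  set ρ : V → V := fun i => if i ∈ A then i else v
  set τ : V → V := fun i => if i ∈ A then v else i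
  have hρA : ∀ i ∈ A, ρ i = i := fun i hi => if_pos hi
  have hτA : ∀ i ∈ A, τ i = v := fun i hi => if_pos hi
  have hρB : ∀ i ∈ B, ρ i = v := fun i hi => by
    by_cases hiA : i ∈ A
    · rw [hρA i hiA, hAB i hiA hi]
    · exact if_neg hiA
  have hτB : ∀ i ∈ B, τ i = i := fun i hi => by
    by_cases hiA : i ∈ A
    · rw [hτA i hiA, hAB i hiA hi]
    · exact if_neg hiA
  have hρ : ∀ i ∈ A ∪ B, ρ i ∈ A := fun i _ => by
    by_cases hiA : i ∈ A <;> simp [ρ, hiA, hvA]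
  have hτ : ∀ i ∈ A ∪ B, τ i ∈ B := fun i hi => by
    rcases Finset.mem_union.1 hi with hiA | hiB
    · rw [hτA i hiA]; exact hvB
    · rw [hτB i hiB]; exact hiB
  refine ⟨(X₁ v v)⁻¹ • (X₁.submatrix ρ ρ ⊙ X₂.submatrix τ τ),
    ⟨(h₁.1.submatrix ρ hρ).hadamard hmul (h₂.1.submatrix τ hτ) |>.smul hs0 hmul
      (inv_nonneg.2 hc.le), fun i hi j hj => ?_⟩, fun i hi j hj => ?_, fun i hi j hj => ?_⟩
  · simp only [Matrix.smul_apply, hadamard_apply, submatrix_apply, smul_eq_mul]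
    exact mul_nonneg (inv_nonneg.2 hc.le) (mul_nonneg (h₁.2 _ (hρ i hi) _ (hρ j hj))
      (h₂.2 _ (hτ i hi) _ (hτ j hj)))
  · simp only [Matrix.smul_apply, hadamard_apply, submatrix_apply, smul_eq_mul, hρA i hi,
      hρA j hj, hτA i hi, hτA j hj, ← hdiag]
    field_simp
  · simp only [Matrix.smul_apply, hadamard_apply, submatrix_apply, smul_eq_mul, hρB i hi,
      hρB j hj, hτB i hi, hτB j hj]
    field_simp

theorem exists_glue_of_eq_zero (hs0 : Set.Ici 0 ⊆ s) (h₁ : IsNonnegGramOn s X₁ A)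
    (h₂ : IsNonnegGramOn s X₂ B) (h₁₀ : ∀ i ∈ A ∩ B, ∀ j ∈ A ∩ B, X₁ i j = 0)
    (h₂₀ : ∀ i ∈ A ∩ B, ∀ j ∈ A ∩ B, X₂ i j = 0) :
    ∃ Y, IsNonnegGramOn s Y (A ∪ B) ∧ AgreeOn A Y X₁ ∧ AgreeOn B Y X₂ := by
  have h0 : (0 : ℝ) ∈ s := hs0 (Set.mem_Ici.2 le_rfl)
  refine ⟨principalBlock A X₁ + principalBlock B X₂,
    ⟨(h₁.1.principalBlock h0).add (h₂.1.principalBlock h0), fun i _ j _ => ?_⟩,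
    fun i hi j hj => ?_, fun i hi j hj => ?_⟩
  · simp only [Matrix.add_apply, principalBlock, of_apply]
    refine add_nonneg ?_ ?_ <;> split_ifs with h
    exacts [h₁.2 i h.1 j h.2, le_rfl, h₂.2 i h.1 j h.2, le_rfl]
  · simp only [Matrix.add_apply, principalBlock, of_apply, hi, hj, and_self, if_true]
    split_ifs with h
    · rw [h₂₀ i (Finset.mem_inter.2 ⟨hi, h.1⟩) j (Finset.mem_inter.2 ⟨hj, h.2⟩), add_zero]
    · rw [add_zero]
  · simp only [Matrix.add_apply, principalBlock, of_apply, hi, hj, and_self, if_true]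
    split_ifs with h
    · rw [h₁₀ i (Finset.mem_inter.2 ⟨h.1, hi⟩) j (Finset.mem_inter.2 ⟨h.2, hj⟩), zero_add]
    · rw [zero_add]

theorem exists_glue (hs0 : Set.Ici 0 ⊆ s) (hmul : ∀ a ∈ s, ∀ b ∈ s, a * b ∈ s)
    (h₁ : IsNonnegGramOn s X₁ A) (h₂ : IsNonnegGramOn s X₂ B) (hAB : (A ∩ B).card ≤ 1)
    (hdiag : ∀ v ∈ A ∩ B, X₁ v v = X₂ v v) :
    ∃ Y, IsNonnegGramOn s Y (A ∪ B) ∧ AgreeOn A Y X₁ ∧ AgreeOn B Y X₂ := by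
  have hAB' : ∀ u ∈ A ∩ B, ∀ w ∈ A ∩ B, u = w := Finset.card_le_one.1 hAB
  by_cases hpos : ∃ v ∈ A ∩ B, X₁ v v ≠ 0
  · obtain ⟨v, hv, hc⟩ := hpos
    obtain ⟨hvA, hvB⟩ := Finset.mem_inter.1 hv
    exact h₁.exists_glue_of_pos hs0 hmul h₂ hvA hvB
      (fun i hiA hiB => hAB' i (Finset.mem_inter.2 ⟨hiA, hiB⟩) v hv)
      ((h₁.2 v hvA v hvA).lt_of_ne' hc) (hdiag v hv)
  · push Not at hpos
    refine h₁.exists_glue_of_eq_zero hs0 h₂ (fun i hi j hj => ?_) (fun i hi j hj => ?_)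
    all_goals obtain rfl := hAB' i hi j hj
    exacts [hpos i hi, hdiag i hi ▸ hpos i hi]

end IsNonnegGramOn

end Glue

theorem exists_agreeOn_biUnion {V ι : Type} [DecidableEq V] [DecidableEq ι]
    (P : Matrix V V ℝ → Finset V → Prop) (C : ι → Finset V) (hP : ∀ X, P X ∅)
    (hglue : ∀ X₁ X₂ A B, P X₁ A → P X₂ B → (A ∩ B).card ≤ 1 →
      (∀ v ∈ A ∩ B, X₁ v v = X₂ v v) → ∃ Y, P Y (A ∪ B) ∧ AgreeOn A Y X₁ ∧ AgreeOn B Y X₂)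
    (hleaf : ∀ S : Finset ι, S.Nonempty → ∃ q ∈ S, (C q ∩ (S.erase q).biUnion C).card ≤ 1)
    {X : Matrix V V ℝ} (hX : ∀ q, P X (C q)) (S : Finset ι) :
    ∃ Y, P Y (S.biUnion C) ∧ ∀ q ∈ S, AgreeOn (C q) Y X := by
  induction S using Finset.strongInduction with
  | H S ih =>
  rcases S.eq_empty_or_nonempty with rfl | hS
  · exact ⟨X, by simpa using hP X, by simp⟩
  obtain ⟨q, hq, hcard⟩ := hleaf S hS
  obtain ⟨Y', hY', hY'X⟩ := ih _ (Finset.erase_ssubset hq)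
  have hdiag : ∀ v ∈ C q ∩ (S.erase q).biUnion C, X v v = Y' v v := by
    intro v hv
    obtain ⟨r, hr, hvr⟩ := Finset.mem_biUnion.1 (Finset.mem_inter.1 hv).2
    exact (hY'X r hr v hvr v hvr).symm
  obtain ⟨Y, hY, hYX, hYY'⟩ := hglue X Y' _ _ (hX q) hY' hcard hdiag
  refine ⟨Y, ?_, fun r hr i hi j hj => ?_⟩
  · rwa [← Finset.insert_erase hq, Finset.biUnion_insert]
  by_cases hrq : r = q
  · subst hrq
    exact hYX i hi j hj
  have hr' : r ∈ S.erase q := Finset.mem_erase.2 ⟨hrq, hr⟩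
  rw [hYY' i (Finset.mem_biUnion.2 ⟨r, hr', hi⟩) j (Finset.mem_biUnion.2 ⟨r, hr', hj⟩)]
  exact hY'X r hr' i hi j hj

namespace IsBlockClique

variable {V ι : Type} [Fintype V] [DecidableEq V] [Fintype ι] {G : SimpleGraph V} {C : ι → Finset V}

theorem biUnion_eq_univ (hC : IsBlockClique G C) : Finset.univ.biUnion C = Finset.univ :=
  Finset.eq_univ_of_forall fun i => by
    obtain ⟨q, hq, -⟩ := hC.exists_mem_mem (Or.inl (rfl : i = i))
    exact Finset.mem_biUnion.2 ⟨q, Finset.mem_univ q, hq⟩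

theorem exists_isNonnegGramOn_univ [DecidableEq ι] (hC : IsBlockClique G C) {s : Set ℝ}
    (hs0 : Set.Ici 0 ⊆ s) (hmul : ∀ a ∈ s, ∀ b ∈ s, a * b ∈ s) {X : Matrix V V ℝ}
    (hX : ∀ q, IsNonnegGramOn s X (C q)) :
    ∃ Y, IsNonnegGramOn s Y Finset.univ ∧ ∀ q, AgreeOn (C q) Y X := by
  obtain ⟨Y, hY, hYX⟩ := exists_agreeOn_biUnion (IsNonnegGramOn s) C (isNonnegGramOn_empty s)
    (fun _ _ _ _ h₁ h₂ => h₁.exists_glue hs0 hmul h₂) hC.exists_leaf hX Finset.univ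
  rw [hC.biUnion_eq_univ] at hY
  exact ⟨Y, hY, fun q => hYX q (Finset.mem_univ q)⟩

end IsBlockClique

section Cones

variable {n : ℕ}

theorem isSymm_and_gammaOn_of_mem_Gamma {X : Matrix (Fin n) (Fin n) ℝ} (hX : X ∈ Gamma n) :
    X.IsSymm ∧ ∀ A : Finset (Fin n), GammaOn X A := by
  obtain ⟨x, hx, rfl⟩ := hX
  exact ⟨transpose_vecMulVec x x, fun A => ⟨x, hx, fun i _ j _ => rfl⟩⟩

theorem exists_mem_Gamma_agreeOn {ι : Type} {C : ι → Finset (Fin n)} {X : Matrix (Fin n) (Fin n) ℝ}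
    (hX : ∀ q, GammaOn X (C q)) : ∃ Y ∈ Gamma n, ∀ q, AgreeOn (C q) Y X := by
  refine ⟨vecMulVec (fun i => √(X i i)) (fun i => √(X i i)),
    ⟨_, fun i => Real.sqrt_nonneg _, rfl⟩, fun q i hi j hj => ?_⟩
  obtain ⟨y, hy, hXy⟩ := hX q
  have hsqrt : ∀ k ∈ C q, √(X k k) = y k := fun k hk => by
    rw [hXy k hk k hk, Real.sqrt_mul_self (hy k)]
  rw [vecMulVec_apply, hsqrt i hi, hsqrt j hj, hXy i hi j hj]

theorem mem_CPP_iff_isGramOn {X : Matrix (Fin n) (Fin n) ℝ} :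
    X ∈ CPP n ↔ IsGramOn (Set.Ici 0) X Finset.univ := by
  rw [isGramOn_univ_iff]
  constructor
  · intro hX
    obtain ⟨κ, _, w, z, hw, -, hz, rfl⟩ := mem_convexHull_iff_exists_fintype.1 hX
    choose x hx hzx using hz
    refine ⟨κ, inferInstance, fun k => √(w k) • x k, fun k i => ?_, ?_⟩
    · exact mul_nonneg (Real.sqrt_nonneg _) (hx k i)
    · refine Finset.sum_congr rfl fun k _ => ?_
      rw [hzx, vecMulVec_smul, smul_vecMulVec, smul_smul, Real.mul_self_sqrt (hw k)]
  · rintro ⟨κ, _, y, hy, rfl⟩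
    rcases isEmpty_or_nonempty κ with hκ | hκ
    · rw [Finset.univ_eq_empty, Finset.sum_empty]
      exact subset_convexHull ℝ _ ⟨0, fun _ => le_rfl, by simp⟩
    set N : ℝ := (Fintype.card κ : ℝ)
    have hN : 0 < N := Nat.cast_pos.2 Fintype.card_pos
    have hterm : ∀ k, vecMulVec (y k) (y k) = N⁻¹ • vecMulVec (√N • y k) (√N • y k) := by
      intro k
      rw [vecMulVec_smul, smul_vecMulVec, smul_smul, smul_smul, mul_assoc, Real.mul_self_sqrt hN.le,
        inv_mul_cancel₀ hN.ne', one_smul]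
    rw [Finset.sum_congr rfl fun k _ => hterm k]
    refine (convex_convexHull ℝ _).sum_mem (fun _ _ => inv_nonneg.2 hN.le) ?_
      fun k _ => subset_convexHull ℝ _ ⟨√N • y k, fun i => ?_, rfl⟩
    · rw [Finset.sum_const, nsmul_eq_mul, Finset.card_univ, mul_inv_cancel₀ hN.ne']
    · exact mul_nonneg (Real.sqrt_nonneg _) (hy k i)

theorem isCPOn_iff_isGramOn {X : Matrix (Fin n) (Fin n) ℝ} {A : Finset (Fin n)} :
    IsCPOn X A ↔ IsGramOn (Set.Ici 0) X A := by
  constructor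
  · rintro ⟨m, y, hy, hXy⟩
    exact ⟨Fin m, inferInstance, y, hy, fun i hi j hj => hXy i hi j hj⟩
  · rintro ⟨κ, _, y, hy, hXy⟩
    let e := Fintype.equivFin κ
    refine ⟨Fintype.card κ, fun k => y (e.symm k), fun k i => hy _ i, fun i hi j hj => ?_⟩
    rw [hXy i hi j hj]
    exact (e.symm.sum_comp fun k => y k i * y k j).symm

theorem isSymm_and_isCPOn_of_mem_CPP {X : Matrix (Fin n) (Fin n) ℝ} (hX : X ∈ CPP n) :
    X.IsSymm ∧ ∀ A : Finset (Fin n), IsCPOn X A := by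
  rw [mem_CPP_iff_isGramOn] at hX
  exact ⟨hX.isSymm, fun A => isCPOn_iff_isGramOn.2 (hX.mono (Finset.subset_univ A))⟩

theorem IsBlockClique.exists_mem_CPP_agreeOn {ι : Type} [Fintype ι] [DecidableEq ι]
    {G : SimpleGraph (Fin n)} {C : ι → Finset (Fin n)} (hC : IsBlockClique G C)
    {X : Matrix (Fin n) (Fin n) ℝ} (hX : ∀ q, IsCPOn X (C q)) :
    ∃ Y ∈ CPP n, ∀ q, AgreeOn (C q) Y X := by
  obtain ⟨Y, hY, hYX⟩ := hC.exists_isNonnegGramOn_univ subset_rfl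
    (fun _ ha _ hb => Set.mem_Ici.2 (mul_nonneg ha hb))
    fun q => (isCPOn_iff_isGramOn.1 (hX q)).isNonnegGramOn
  exact ⟨Y, mem_CPP_iff_isGramOn.2 hY.1, hYX⟩

theorem IsDNNOn.isGramOn {X : Matrix (Fin n) (Fin n) ℝ} {A : Finset (Fin n)}
    (hX : X.IsSymm) (hXA : IsDNNOn X A) : IsGramOn Set.univ X A := by
  have hpsd : (principalBlock A X).PosSemidef := by
    refine .of_dotProduct_mulVec_nonneg ?_ fun x => ?_
    · rw [isHermitian_iff_isSymm, IsSymm.ext_iff]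
      intro i j
      simp only [principalBlock, of_apply, and_comm, hX.apply]
    · rw [star_trivial, dotProduct_principalBlock_mulVec]
      exact hXA.2 _ fun i hi => if_neg hi
  obtain ⟨m, y, hy⟩ := posSemidef_iff_eq_sum_vecMulVec.1 hpsd
  refine ⟨Fin m, inferInstance, y, fun _ _ => trivial, fun i hi j hj => ?_⟩
  simpa [principalBlock, hi, hj, Matrix.sum_apply, vecMulVec_apply] using congrFun (congrFun hy i) j

theorem isSymm_and_isDNNOn_of_mem_DNN {X : Matrix (Fin n) (Fin n) ℝ} (hX : X ∈ DNN n) :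
    X.IsSymm ∧ ∀ A : Finset (Fin n), IsDNNOn X A := by
  obtain ⟨hpsd, hnn⟩ := hX
  exact ⟨isHermitian_iff_isSymm.1 hpsd.1, fun A =>
    ⟨fun i _ j _ => hnn i j, fun x _ => by simpa using hpsd.dotProduct_mulVec_nonneg x⟩⟩

theorem IsBlockClique.exists_mem_DNN_agreeOn {ι : Type} [Fintype ι] [DecidableEq ι]
    {G : SimpleGraph (Fin n)} {C : ι → Finset (Fin n)} (hC : IsBlockClique G C)
    {X : Matrix (Fin n) (Fin n) ℝ} (hsymm : X.IsSymm) (hX : ∀ q, IsDNNOn X (C q)) :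
    ∃ Y ∈ DNN n, ∀ q, AgreeOn (C q) Y X := by
  obtain ⟨Y, hY, hYX⟩ := hC.exists_isNonnegGramOn_univ (Set.subset_univ _) (fun _ _ _ _ => trivial)
    fun q => ⟨(hX q).isGramOn hsymm, fun i hi j hj => (hX q).1 i hi j hj⟩
  exact ⟨Y, ⟨hY.1.posSemidef, fun i j => hY.2 i (Finset.mem_univ i) j (Finset.mem_univ j)⟩, hYX⟩

end Cones

theorem trace_mul_eq_of_forall_ne_zero {V : Type} [Fintype V] {Q X Y : Matrix V V ℝ}
    (h : ∀ i j, Q i j ≠ 0 → Y j i = X j i) : trace (Q * Y) = trace (Q * X) := by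
  simp only [trace, diag, mul_apply]
  refine Finset.sum_congr rfl fun i _ => Finset.sum_congr rfl fun j _ => ?_
  by_cases hQ : Q i j = 0
  · simp [hQ]
  · rw [h i j hQ]

theorem image_eq_image_of_completion {M : Type} {K : Set M} {P Q LC : M → Prop}
    {R : M → M → Prop} {f : M → ℝ} (hK : ∀ X ∈ K, P X ∧ Q X)
    (hcomp : ∀ X, P X → Q X → ∃ Y ∈ K, R Y X) (hR : ∀ X Y, R Y X → LC X → LC Y ∧ f Y = f X) :
    f '' {X | X ∈ K ∧ LC X} = f '' {X | P X ∧ Q X ∧ LC X} := by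
  ext r
  constructor
  · rintro ⟨X, ⟨hXK, hX⟩, rfl⟩
    exact ⟨X, ⟨(hK X hXK).1, (hK X hXK).2, hX⟩, rfl⟩
  · rintro ⟨X, ⟨hP, hQ, hX⟩, rfl⟩
    obtain ⟨Y, hYK, hYX⟩ := hcomp X hP hQ
    obtain ⟨hY, hfY⟩ := hR X Y hYX hX
    exact ⟨Y, ⟨hYK, hY⟩, hfY⟩

theorem stmt_11 {n ℓ : ℕ} {ι : Type} [DecidableEq ι] (Ieq Iineq : Finset ι)
    (Q0 : Matrix (Fin (n + 1)) (Fin (n + 1)) ℝ)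
    (Q : ι → Matrix (Fin (n + 1)) (Fin (n + 1)) ℝ)
    (G : SimpleGraph (Fin (n + 1)))
    (hchordal : IsChordal G)
    (C : Fin ℓ → Finset (Fin (n + 1)))
    (hmax : ∀ q, IsMaxClique G (C q : Set (Fin (n + 1))))
    (hall : ∀ s : Finset (Fin (n + 1)), IsMaxClique G (s : Set (Fin (n + 1))) → ∃ q, C q = s)
    -- block-clique: any two distinct maximal cliques intersect in at most one vertex
    (hbc : ∀ q r, q ≠ r → ((C q) ∩ (C r)).card ≤ 1)
    -- aggregated sparsity: the nonzero pattern of every data matrix is contained in Ē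
    (hsp0 : ∀ i j, Q0 i j ≠ 0 → i = j ∨ G.Adj i j)
    (hsp : ∀ p ∈ Ieq ∪ Iineq, ∀ i j, Q p i j ≠ 0 → i = j ∨ G.Adj i j) :
    -- the linear constraints, common to COP(K) and its decomposition
    let LC : Matrix (Fin (n + 1)) (Fin (n + 1)) ℝ → Prop := fun X =>
      X 0 0 = 1 ∧ (∀ p ∈ Ieq, trace (Q p * X) = 0) ∧ ∀ p ∈ Iineq, trace (Q p * X) ≤ 0
    let obj : Matrix (Fin (n + 1)) (Fin (n + 1)) ℝ → ℝ := fun X => trace (Q0 * X)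
    (sInf (obj '' {X | X ∈ Gamma (n + 1) ∧ LC X}) =
       sInf (obj '' {X | X.IsSymm ∧ (∀ q, GammaOn X (C q : Set (Fin (n + 1)))) ∧ LC X})) ∧
    (sInf (obj '' {X | X ∈ CPP (n + 1) ∧ LC X}) =
       sInf (obj '' {X | X.IsSymm ∧ (∀ q, IsCPOn X (C q : Set (Fin (n + 1)))) ∧ LC X})) ∧
    (sInf (obj '' {X | X ∈ DNN (n + 1) ∧ LC X}) =
       sInf (obj '' {X | X.IsSymm ∧ (∀ q, IsDNNOn X (C q : Set (Fin (n + 1)))) ∧ LC X})) := by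
  intro LC obj
  have hC : IsBlockClique G C := ⟨hchordal, hmax, hall, hbc⟩
  have htrace : ∀ X Y, (∀ q, AgreeOn (C q) Y X) → ∀ P : Matrix (Fin (n + 1)) (Fin (n + 1)) ℝ,
      (∀ i j, P i j ≠ 0 → i = j ∨ G.Adj i j) → trace (P * Y) = trace (P * X) :=
    fun X Y hYX P hP => trace_mul_eq_of_forall_ne_zero fun i j hij => by
      obtain ⟨q, hi, hj⟩ := hC.exists_mem_mem (hP i j hij)
      exact hYX q j hj i hi
  have hR : ∀ X Y, (∀ q, AgreeOn (C q) Y X) → LC X → LC Y ∧ obj Y = obj X := by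
    rintro X Y hYX ⟨h00, heq, hineq⟩
    obtain ⟨q, h0, -⟩ := hC.exists_mem_mem (Or.inl (rfl : (0 : Fin (n + 1)) = 0))
    refine ⟨⟨(hYX q 0 h0 0 h0).trans h00, fun p hp => ?_, fun p hp => ?_⟩, htrace X Y hYX Q0 hsp0⟩
    · rw [htrace X Y hYX (Q p) (hsp p (Finset.mem_union_left _ hp))]
      exact heq p hp
    · rw [htrace X Y hYX (Q p) (hsp p (Finset.mem_union_right _ hp))]
      exact hineq p hp
  refine ⟨congrArg sInf ?_, congrArg sInf ?_, congrArg sInf ?_⟩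
  · exact image_eq_image_of_completion (fun X hX => (isSymm_and_gammaOn_of_mem_Gamma hX).imp_right
      fun h q => h (C q)) (fun X _ hX => exists_mem_Gamma_agreeOn hX) hR
  · exact image_eq_image_of_completion (fun X hX => (isSymm_and_isCPOn_of_mem_CPP hX).imp_right
      fun h q => h (C q)) (fun X _ hX => hC.exists_mem_CPP_agreeOn hX) hR
  · exact image_eq_image_of_completion (fun X hX => (isSymm_and_isDNNOn_of_mem_DNN hX).imp_right
      fun h q => h (C q)) (fun X hX hX' => hC.exists_mem_DNN_agreeOn hX hX') hR
end

section
/- Suppose the data matrices Q⁰ and Qᵖ (p ∈ I_eq ∪ I_ineq) are all diagonal. Then the problems inf{⟨Q⁰,X⟩ : X ∈ K, X_{kk} = 1, ⟨Qᵖ,X⟩ = 0 (p ∈ I_eq), ⟨Qᵖ,X⟩ ≤ 0 (p ∈ I_ineq)} have the same optimal value for K = Γⁿ, K = CPPⁿ, and K = DNNⁿ, and each is equivalent to the linear program inf{Σᵢ Q⁰ᵢᵢ Xᵢᵢ : Xᵢᵢ ≥ 0, X_{kk} = 1, Σᵢ Qᵖᵢᵢ Xᵢᵢ = 0 (p ∈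 I_eq), Σᵢ Qᵖᵢᵢ Xᵢᵢ ≤ 0 (p ∈ I_ineq)} in the diagonal variables only. -/
/-!
With diagonal data, the objective and all constraints of the conic program see `X` only through
its diagonal `diag X`, on which they are exactly the linear program. So the optimal value only
depends on the set of diagonals `diag '' K`, and for each of `Γⁿ`, `CPPⁿ`, `DNNⁿ` this set is the
nonnegative orthant: `diag (x xᵀ) = (xᵢ²)ᵢ` reaches every `u ≥ 0` via `x = √u`, taking convex hulls
commutes with the linear map `diag`, and `diagonal u ∈ DNNⁿ` for `u ≥ 0`.
-/

open Matrix

namespace Matrix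

variable {m : Type*} [Fintype m] [DecidableEq m]

theorem IsDiag.trace_mul {Q : Matrix m m ℝ} (hQ : Q.IsDiag) (X : Matrix m m ℝ) :
    trace (Q * X) = ∑ i, Q i i * X i i := by
  conv_lhs => rw [← hQ.diagonal_diag]
  simp only [trace, diag_apply, diagonal_mul]

theorem image_conic_feasible_eq_of_image_diag_eq_Ici {ι : Type*} [DecidableEq ι]
    (Ieq Iineq : Finset ι) {Q0 : Matrix m m ℝ} {Q : ι → Matrix m m ℝ} (hQ0 : Q0.IsDiag)
    (hQ : ∀ p ∈ Ieq ∪ Iineq, (Q p).IsDiag) (k : m) {K : Set (Matrix m m ℝ)}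
    (hK : diag '' K = Set.Ici 0) :
    (fun X => trace (Q0 * X)) ''
        {X | X ∈ K ∧ X k k = 1 ∧ (∀ p ∈ Ieq, trace (Q p * X) = 0) ∧
          ∀ p ∈ Iineq, trace (Q p * X) ≤ 0} =
      (fun u => ∑ i, Q0 i i * u i) ''
        {u : m → ℝ | (∀ i, 0 ≤ u i) ∧ u k = 1 ∧
          (∀ p ∈ Ieq, ∑ i, Q p i i * u i = 0) ∧
          ∀ p ∈ Iineq, ∑ i, Q p i i * u i ≤ 0} := by
  set L := {u : m → ℝ | (∀ i, 0 ≤ u i) ∧ u k = 1 ∧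
    (∀ p ∈ Ieq, ∑ i, Q p i i * u i = 0) ∧ ∀ p ∈ Iineq, ∑ i, Q p i i * u i ≤ 0}
  have hfeas : {X | X ∈ K ∧ X k k = 1 ∧ (∀ p ∈ Ieq, trace (Q p * X) = 0) ∧
      ∀ p ∈ Iineq, trace (Q p * X) ≤ 0} = K ∩ diag ⁻¹' L := by
    ext X
    constructor
    · rintro ⟨hXK, hXk, hXeq, hXle⟩
      have hX0 : diag X ∈ Set.Ici 0 := hK ▸ Set.mem_image_of_mem diag hXK
      refine ⟨hXK, hX0, hXk, fun p hp => ?_, fun p hp => ?_⟩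
      · simpa only [(hQ p (Finset.mem_union_left _ hp)).trace_mul, diag_apply] using hXeq p hp
      · simpa only [(hQ p (Finset.mem_union_right _ hp)).trace_mul, diag_apply] using hXle p hp
    · rintro ⟨hXK, -, hXk, hXeq, hXle⟩
      refine ⟨hXK, hXk, fun p hp => ?_, fun p hp => ?_⟩
      · simpa only [(hQ p (Finset.mem_union_left _ hp)).trace_mul, diag_apply] using hXeq p hp
      · simpa only [(hQ p (Finset.mem_union_right _ hp)).trace_mul, diag_apply] using hXle p hp
  have hobj : (fun X => trace (Q0 * X)) = (fun u => ∑ i, Q0 i i * u i) ∘ diag :=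
    funext hQ0.trace_mul
  have hL : L ⊆ Set.Ici 0 := fun u hu => hu.1
  rw [hfeas, hobj, Set.image_comp, Set.image_inter_preimage, hK, Set.inter_eq_right.2 hL]

end Matrix

theorem image_diag_Gamma (n : ℕ) : diag '' Gamma n = Set.Ici 0 := by
  ext u
  constructor
  · rintro ⟨_, ⟨x, -, rfl⟩, rfl⟩ i
    exact mul_self_nonneg (x i)
  · intro hu
    refine ⟨_, ⟨fun i => √(u i), fun i => Real.sqrt_nonneg _, rfl⟩, funext fun i => ?_⟩
    exact Real.mul_self_sqrt (hu i)

theorem image_diag_CPP (n : ℕ) : diag '' CPP n = Set.Ici 0 := by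
  calc diag '' CPP n = convexHull ℝ (diag '' Gamma n) :=
        (diagLinearMap (Fin n) ℝ ℝ).image_convexHull (Gamma n)
    _ = Set.Ici 0 := by rw [image_diag_Gamma, (convex_Ici 0).convexHull_eq]

theorem image_diag_DNN (n : ℕ) : diag '' DNN n = Set.Ici 0 := by
  ext u
  constructor
  · rintro ⟨X, ⟨-, hX⟩, rfl⟩ i
    exact hX i i
  · intro hu
    refine ⟨diagonal u, ⟨PosSemidef.diagonal hu, fun i j => ?_⟩, diag_diagonal u⟩
    rcases eq_or_ne i j with rfl | hij
    · simpa using hu i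
    · simp [diagonal_apply_ne _ hij]

theorem stmt_17 {n : ℕ} {ι : Type} [DecidableEq ι] (Ieq Iineq : Finset ι)
    (Q0 : Matrix (Fin n) (Fin n) ℝ) (Q : ι → Matrix (Fin n) (Fin n) ℝ)
    -- all data matrices are diagonal
    (hQ0 : Q0.IsDiag) (hQ : ∀ p ∈ Ieq ∪ Iineq, (Q p).IsDiag)
    (k : Fin n) :
    let Feas : Set (Matrix (Fin n) (Fin n) ℝ) → Set (Matrix (Fin n) (Fin n) ℝ) := fun K =>
      {X | X ∈ K ∧ X k k = 1 ∧ (∀ p ∈ Ieq, trace (Q p * X) = 0) ∧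
        ∀ p ∈ Iineq, trace (Q p * X) ≤ 0}
    let val : Set (Matrix (Fin n) (Fin n) ℝ) → ℝ := fun K =>
      sInf ((fun X => trace (Q0 * X)) '' Feas K)
    -- the linear program in the diagonal variables only
    let lpval : ℝ := sInf ((fun u => ∑ i, Q0 i i * u i) ''
      {u : Fin n → ℝ | (∀ i, 0 ≤ u i) ∧ u k = 1 ∧
        (∀ p ∈ Ieq, ∑ i, Q p i i * u i = 0) ∧
        ∀ p ∈ Iineq, ∑ i, Q p i i * u i ≤ 0})
    val (Gamma n) = val (CPP n) ∧ val (CPP n) = val (DNN n) ∧ val (DNN n) = lpval := by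
  intro Feas val lpval
  have hval : ∀ K, diag '' K = Set.Ici 0 → val K = lpval := fun _ hK =>
    congrArg sInf (image_conic_feasible_eq_of_image_diag_eq_Ici Ieq Iineq hQ0 hQ k hK)
  have hGamma := hval _ (image_diag_Gamma n)
  have hCPP := hval _ (image_diag_CPP n)
  have hDNN := hval _ (image_diag_DNN n)
  exact ⟨hGamma.trans hCPP.symm, hCPP.trans hDNN.symm, hDNN⟩
end
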